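/- arXiv:1003.5621 — 6 statements merged into one kernel-verified Lean document; each statement's English description precedes it below -/
import Mathlib

section
/- Let X be a compact metric space and Y a metric space, and let f, h : X → Y be continuous maps with |f(x) h(x)| < δ for all x ∈ X. Then for all x, x' ∈ X and all ε > 0: pull_{f,ε}(x,x') ≤ pull_{h,ε}(x,x') + 4·δ·pack_ε(X), where pack_ε(X) is the maximal number of points in X at pairwise distance > ε. -/
open Filter
open scoped ENNReal

section PullDefs
variable {X Y : Type*} [MetricSpace X] [MetricSpace Y]

/-- `c 0, …, c n` is an `ε`-chain from `x` to `x'`. -/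
def IsEpsChain (ε : ℝ) (n : ℕ) (c : ℕ → X) (x x' : X) : Prop :=
  c 0 = x ∧ c n = x' ∧ ∀ i < n, dist (c i) (c (i + 1)) ≤ ε

/-- `pull_{f,ε}(x,x')`: infimum over `ε`-chains of the sum of image distances. -/
noncomputable def pullEps (f : X → Y) (ε : ℝ) (x x' : X) : ℝ≥0∞ :=
  ⨅ (n : ℕ) (c : ℕ → X) (_ : IsEpsChain ε n c x x'),
    ∑ i ∈ Finset.range n, edist (f (c i)) (f (c (i + 1)))

/-- `pull_f(x,x') = lim_{ε→0+} pull_{f,ε}(x,x') = sup_{ε>0} pull_{f,ε}(x,x')`. -/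
noncomputable def pullMet (f : X → Y) (x x' : X) : ℝ≥0∞ :=
  ⨆ (ε : ℝ) (_ : 0 < ε), pullEps f ε x x'

/-- `f` is an intrinsic isometry if the pulled-back metric coincides with the metric of `X`. -/
def IsIntrinsicIsometry (f : X → Y) : Prop :=
  Continuous f ∧ ∀ x x', edist x x' = pullMet f x x'

end PullDefs

/-- `pack_ε(X)`: maximal number of points at pairwise distance `> ε`. -/
noncomputable def packNum (X : Type*) [MetricSpace X] (ε : ℝ) : ℕ :=
  sSup {n | ∃ s : Finset X, s.card = n ∧ ∀ x ∈ s, ∀ y ∈ s, x ≠ y → ε < dist x y}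

lemma card_le_packNum {X : Type*} [MetricSpace X] [CompactSpace X] {ε : ℝ} (hε : 0 < ε)
    (s : Finset X) (hs : ∀ x ∈ s, ∀ y ∈ s, x ≠ y → ε < dist x y) :
    s.card ≤ packNum X ε := by
  obtain ⟨t, -, htf, htc⟩ := (isCompact_univ (X := X)).finite_cover_balls
    (show (0:ℝ) < ε/2 by linarith)
  have key : ∀ u : Finset X, (∀ x ∈ u, ∀ y ∈ u, x ≠ y → ε < dist x y) →
      u.card ≤ htf.toFinset.card := by
    intro u hu
    have hg : ∀ x : X, ∃ y ∈ t, dist x y < ε/2 := by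
      intro x
      have := htc (Set.mem_univ x)
      simp only [Set.mem_iUnion, Metric.mem_ball] at this
      simpa using this
    choose g hg1 hg2 using hg
    apply Finset.card_le_card_of_injOn g
    · intro a _; simpa using hg1 a
    · intro a ha b hb hab
      by_contra hne
      have h1 := hu a ha b hb hne
      have : dist a b < ε := by
        calc dist a b ≤ dist a (g a) + dist (g b) b := by
              rw [hab]; exact dist_triangle a (g b) b
          _ < ε/2 + ε/2 := by
              rw [dist_comm (g b) b]; linarith [hg2 a, hg2 b]
          _ = ε := by ring
      linarith
  exact le_csSup ⟨htf.toFinset.card, fun n ⟨u, hcard, hu⟩ => hcard ▸ key u hu⟩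
    ⟨s, rfl, hs⟩

lemma key_chain {X Y : Type*} [MetricSpace X] [CompactSpace X] [MetricSpace Y]
    (f h : X → Y) (δ : ℝ) (hδ : 0 < δ) (hclose : ∀ x : X, dist (f x) (h x) < δ)
    (ε : ℝ) (hε : 0 < ε) (x x' : X) (n : ℕ) :
    ∀ (c : ℕ → X), IsEpsChain ε n c x x' →
      pullEps f ε x x' ≤ (∑ i ∈ Finset.range n, edist (h (c i)) (h (c (i + 1)))) +
        ENNReal.ofReal (4 * δ * (packNum X ε : ℝ)) := by
  induction n using Nat.strong_induction_on with
  | _ n IH =>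
  intro c hc
  set N := packNum X ε with hN
  by_cases hn : n ≤ 2 * N
  · -- use the chain itself
    have h1 : pullEps f ε x x' ≤ ∑ i ∈ Finset.range n, edist (f (c i)) (f (c (i + 1))) :=
      iInf_le_of_le n (iInf_le_of_le c (iInf_le _ hc))
    refine h1.trans ?_
    have h2 : ∀ i, edist (f (c i)) (f (c (i + 1))) ≤
        edist (h (c i)) (h (c (i + 1))) + ENNReal.ofReal (2 * δ) := by
      intro i
      calc edist (f (c i)) (f (c (i + 1)))
          ≤ edist (f (c i)) (h (c i)) + edist (h (c i)) (h (c (i + 1)))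
              + edist (h (c (i + 1))) (f (c (i + 1))) := edist_triangle4 _ _ _ _
        _ ≤ ENNReal.ofReal δ + edist (h (c i)) (h (c (i + 1))) + ENNReal.ofReal δ := by
            gcongr
            · rw [edist_dist]; exact ENNReal.ofReal_le_ofReal (hclose _).le
            · rw [edist_dist, dist_comm]; exact ENNReal.ofReal_le_ofReal (hclose _).le
        _ = edist (h (c i)) (h (c (i + 1))) + ENNReal.ofReal (2 * δ) := by
            rw [two_mul, ENNReal.ofReal_add hδ.le hδ.le]; ring
    calc ∑ i ∈ Finset.range n, edist (f (c i)) (f (c (i + 1)))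
        ≤ ∑ i ∈ Finset.range n, (edist (h (c i)) (h (c (i + 1))) + ENNReal.ofReal (2 * δ)) :=
          Finset.sum_le_sum fun i _ => h2 i
      _ = (∑ i ∈ Finset.range n, edist (h (c i)) (h (c (i + 1)))) + n * ENNReal.ofReal (2 * δ) := by
          rw [Finset.sum_add_distrib, Finset.sum_const, Finset.card_range, nsmul_eq_mul]
      _ ≤ (∑ i ∈ Finset.range n, edist (h (c i)) (h (c (i + 1)))) + ENNReal.ofReal (4 * δ * N) := by
          gcongr
          have : (n : ℝ≥0∞) * ENNReal.ofReal (2 * δ) = ENNReal.ofReal ((n : ℝ) * (2 * δ)) := by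
            rw [← ENNReal.ofReal_natCast n, ← ENNReal.ofReal_mul (by positivity)]
          rw [this]
          apply ENNReal.ofReal_le_ofReal
          have hn' : (n : ℝ) ≤ 2 * N := by exact_mod_cast hn
          nlinarith
  · by_cases hred : ∃ k j, k + 2 ≤ j ∧ j ≤ n ∧ dist (c k) (c j) ≤ ε
    · obtain ⟨k, j, hkj, hjn, hd⟩ := hred
      set s := j - k - 1 with hs
      set m := n - s with hm
      have hs1 : 1 ≤ s := by omega
      have hjs : j = k + 1 + s := by omega
      have hns : n = m + s := by omega
      have hkm : k + 1 ≤ m := by omega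
      have hmn : m < n := by omega
      set c' : ℕ → X := fun i => if i ≤ k then c i else c (i + s) with hc'
      have hchain' : IsEpsChain ε m c' x x' := by
        refine ⟨?_, ?_, ?_⟩
        · simp only [hc', if_pos (Nat.zero_le k)]; exact hc.1
        · have : ¬ m ≤ k := by omega
          simp only [hc', if_neg this]
          rw [show m + s = n by omega]; exact hc.2.1
        · intro i hi
          rcases lt_trichotomy i k with hik | hik | hik
          · simp only [hc', if_pos hik.le, if_pos (by omega : i + 1 ≤ k)]
            exact hc.2.2 i (by omega)
          · subst hik
            simp only [hc', if_pos le_rfl, if_neg (by omega : ¬ i + 1 ≤ i)]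
            rw [show i + 1 + s = j by omega]; exact hd
          · simp only [hc', if_neg (by omega : ¬ i ≤ k), if_neg (by omega : ¬ i + 1 ≤ k)]
            rw [show i + 1 + s = i + s + 1 by omega]
            exact hc.2.2 (i + s) (by omega)
      refine (IH m hmn c' hchain').trans ?_
      gcongr
      have hsplit : ∑ i ∈ Finset.range n, edist (h (c i)) (h (c (i + 1)))
          = (∑ i ∈ Finset.Ico 0 k, edist (h (c i)) (h (c (i + 1))))
            + (∑ i ∈ Finset.Ico k j, edist (h (c i)) (h (c (i + 1))))
            + (∑ i ∈ Finset.Ico j n, edist (h (c i)) (h (c (i + 1)))) := by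
        rw [Finset.range_eq_Ico,
          ← Finset.sum_Ico_consecutive _ (Nat.zero_le j) (by omega : j ≤ n),
          ← Finset.sum_Ico_consecutive _ (Nat.zero_le k) (by omega : k ≤ j)]
      rw [hsplit]
      have hsplit' : ∑ i ∈ Finset.range m, edist (h (c' i)) (h (c' (i + 1)))
          = (∑ i ∈ Finset.Ico 0 k, edist (h (c' i)) (h (c' (i + 1))))
            + (edist (h (c' k)) (h (c' (k + 1)))
            + (∑ i ∈ Finset.Ico (k+1) m, edist (h (c' i)) (h (c' (i + 1))))) := by
        rw [Finset.range_eq_Ico,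
          ← Finset.sum_Ico_consecutive _ (Nat.zero_le k) (by omega : k ≤ m),
          Finset.sum_eq_sum_Ico_succ_bot (by omega : k < m)]
      have e1 : ∑ i ∈ Finset.Ico 0 k, edist (h (c' i)) (h (c' (i + 1)))
          = ∑ i ∈ Finset.Ico 0 k, edist (h (c i)) (h (c (i + 1))) := by
        apply Finset.sum_congr rfl
        intro i hi
        simp only [Finset.mem_Ico] at hi
        simp only [hc', if_pos (by omega : i ≤ k), if_pos (by omega : i + 1 ≤ k)]
      have e2 : edist (h (c' k)) (h (c' (k + 1)))
          ≤ ∑ i ∈ Finset.Ico k j, edist (h (c i)) (h (c (i + 1))) := by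
        simp only [hc', if_pos le_rfl, if_neg (by omega : ¬ k + 1 ≤ k)]
        rw [show k + 1 + s = j by omega]
        exact edist_le_Ico_sum_edist (fun i => h (c i)) (by omega : k ≤ j)
      have e3 : ∑ i ∈ Finset.Ico (k+1) m, edist (h (c' i)) (h (c' (i + 1)))
          = ∑ i ∈ Finset.Ico j n, edist (h (c i)) (h (c (i + 1))) := by
        rw [Finset.sum_Ico_eq_sum_range, Finset.sum_Ico_eq_sum_range]
        rw [show n - j = m - (k + 1) by omega]
        apply Finset.sum_congr rfl
        intro i hi
        simp only [hc', if_neg (by omega : ¬ k + 1 + i ≤ k),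
          if_neg (by omega : ¬ k + 1 + i + 1 ≤ k)]
        rw [show k + 1 + i + s = j + i by omega, show k + 1 + i + 1 + s = j + i + 1 by omega]
      rw [hsplit', e1, e3, ← add_assoc]
      gcongr
    · exfalso
      classical
      push_neg at hred
      set u : Finset X := (Finset.range (N + 1)).image (fun i => c (2 * i)) with hu
      have hdist : ∀ i ∈ Finset.range (N+1), ∀ i' ∈ Finset.range (N+1), i ≠ i' →
          ε < dist (c (2*i)) (c (2*i')) := by
        intro i hi i' hi' hne
        simp only [Finset.mem_range] at hi hi'
        rcases hne.lt_or_gt with hlt | hlt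
        · exact hred (2*i) (2*i') (by omega) (by omega)
        · rw [dist_comm]; exact hred (2*i') (2*i) (by omega) (by omega)
      have hinj : Set.InjOn (fun i => c (2 * i)) (Finset.range (N+1)) := by
        intro a ha b hb hab
        by_contra hne
        have := hdist a ha b hb hne
        have hab' : c (2*a) = c (2*b) := hab
        rw [hab'] at this
        simp at this
        linarith
      have hcard : u.card = N + 1 := by
        rw [hu, Finset.card_image_of_injOn hinj, Finset.card_range]
      have hpair : ∀ a ∈ u, ∀ b ∈ u, a ≠ b → ε < dist a b := by
        intro a ha b hb hne
        simp only [hu, Finset.mem_image] at ha hb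
        obtain ⟨i, hi, rfl⟩ := ha
        obtain ⟨i', hi', rfl⟩ := hb
        exact hdist i hi i' hi' (fun hii => hne (by rw [hii]))
      have := card_le_packNum hε u hpair
      omega

/-- if `f` and `h` are uniformly `δ`-close then
`pull_{f,ε} ≤ pull_{h,ε} + 4·δ·pack_ε(X)`. -/
theorem pullEps_le_pullEps_add {X Y : Type*} [MetricSpace X] [CompactSpace X] [MetricSpace Y]
    (f h : X → Y) (hf : Continuous f) (hh : Continuous h)
    (δ : ℝ) (hδ : 0 < δ) (hclose : ∀ x : X, dist (f x) (h x) < δ)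
    (ε : ℝ) (hε : 0 < ε) (x x' : X) :
    pullEps f ε x x' ≤ pullEps h ε x x' + ENNReal.ofReal (4 * δ * (packNum X ε : ℝ)) := by
  simp only [pullEps, ENNReal.iInf_add]
  refine le_iInf fun n => le_iInf fun c => le_iInf fun hchain => ?_
  exact key_chain f h δ hδ hclose ε hε x x' n c hchain
end

section
/- Let X be a compact metric space, Y a metric space, and ι : X → Y an intrinsic isometry. Then for every ε > 0 there exists δ > 0 such that every connected subset W ⊆ X with diam ι(W) < δ satisfies diam W < ε. -/
open Filter Topology
open scoped ENNReal

/-- Packing bound from compactness. -/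
lemma exists_pack_bound {X : Type*} [MetricSpace X] [CompactSpace X] {ε : ℝ} (hε : 0 < ε) :
    ∃ P : ℕ, ∀ s : Finset X, (∀ x ∈ s, ∀ y ∈ s, x ≠ y → ε < dist x y) → s.card ≤ P := by
  obtain ⟨t, htf, htc⟩ := (Metric.totallyBounded_iff.mp
    (isCompact_univ : IsCompact (Set.univ : Set X)).totallyBounded) (ε/2) (by linarith)
  refine ⟨htf.toFinset.card, fun s hs => ?_⟩
  have key : ∀ x : X, ∃ y ∈ htf.toFinset, x ∈ Metric.ball y (ε/2) := by
    intro x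
    have := htc (Set.mem_univ x)
    simp only [Set.mem_iUnion] at this
    obtain ⟨y, hy, hxy⟩ := this
    exact ⟨y, htf.mem_toFinset.mpr hy, hxy⟩
  choose f hf1 hf2 using key
  refine Finset.card_le_card_of_injOn f (fun x _ => hf1 x) ?_
  intro x hx y hy hxy
  by_contra hne
  have h1 := hf2 x
  have h2 := hf2 y
  rw [hxy] at h1
  rw [Metric.mem_ball] at h1 h2
  have hlt : dist x y < ε := by
    calc dist x y ≤ dist x (f y) + dist (f y) y := dist_triangle _ _ _
    _ < ε/2 + ε/2 := add_lt_add h1 (by rw [dist_comm]; exact h2)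
    _ = ε := by ring
  exact absurd (hs x hx y hy hne) (not_lt.mpr hlt.le)

lemma chain_step {X : Type*} [MetricSpace X] {ε : ℝ} {n : ℕ} {c : ℕ → X} {x y y' : X}
    (h : IsEpsChain ε n c x y) (hd : dist y y' ≤ ε) :
    IsEpsChain ε (n+1) (fun i => if i ≤ n then c i else y') x y' := by
  obtain ⟨h0, hn, hs⟩ := h
  refine ⟨by simp [Nat.zero_le n, h0], by simp, fun i hi => ?_⟩
  simp only
  rcases Nat.lt_or_ge i n with h' | h'
  · rw [if_pos h'.le, if_pos (by omega : i + 1 ≤ n)]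
    exact hs i h'
  · have : i = n := by omega
    subst this
    rw [if_pos le_rfl, if_neg (by omega), hn]
    exact hd

/-- In a preconnected set, any two points are joined by an `ε`-chain inside the set. -/
lemma preconnected_chain {X : Type*} [MetricSpace X] {W : Set X} (hW : IsPreconnected W)
    {x x' : X} (hx : x ∈ W) (hx' : x' ∈ W) {ε : ℝ} (hε : 0 < ε) :
    ∃ n c, IsEpsChain ε n c x x' ∧ ∀ i, c i ∈ W := by
  set R : Set X := {y | ∃ n c, IsEpsChain ε n c x y ∧ ∀ i, c i ∈ W} with hR
  have hstep : ∀ y ∈ R, ∀ y' ∈ W, dist y y' ≤ ε → y' ∈ R := by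
    rintro y ⟨n, c, hc, hmem⟩ y' hy' hd
    refine ⟨n+1, _, chain_step hc hd, fun i => ?_⟩
    by_cases h : i ≤ n
    · simpa [h] using hmem i
    · simpa [h] using hy'
  have hxR : x ∈ R := ⟨0, fun _ => x, ⟨rfl, rfl, fun i hi => by omega⟩, fun _ => hx⟩
  by_contra hcon
  push_neg at hcon
  have hx'R : x' ∉ R := by
    rintro ⟨n, c, hc, hm⟩
    obtain ⟨i, hi⟩ := hcon n c hc
    exact hi (hm i)
  set U : Set X := ⋃ y ∈ R ∩ W, Metric.ball y (ε/2)
  set V : Set X := ⋃ y ∈ W \ R, Metric.ball y (ε/2)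
  have hUo : IsOpen U := isOpen_biUnion fun _ _ => Metric.isOpen_ball
  have hVo : IsOpen V := isOpen_biUnion fun _ _ => Metric.isOpen_ball
  have hcov : W ⊆ U ∪ V := by
    intro y hy
    by_cases hyR : y ∈ R
    · exact Or.inl (Set.mem_biUnion ⟨hyR, hy⟩ (Metric.mem_ball_self (by linarith)))
    · exact Or.inr (Set.mem_biUnion ⟨hy, hyR⟩ (Metric.mem_ball_self (by linarith)))
  obtain ⟨z, hzW, hzU, hzV⟩ := hW U V hUo hVo hcov
    ⟨x, hx, Set.mem_biUnion ⟨hxR, hx⟩ (Metric.mem_ball_self (by linarith))⟩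
    ⟨x', hx', Set.mem_biUnion ⟨hx', hx'R⟩ (Metric.mem_ball_self (by linarith))⟩
  obtain ⟨y, hy, hzy⟩ := Set.mem_iUnion₂.mp hzU
  obtain ⟨y', hy', hzy'⟩ := Set.mem_iUnion₂.mp hzV
  have : dist y y' ≤ ε := by
    have h1 := Metric.mem_ball.mp hzy
    have h2 := Metric.mem_ball.mp hzy'
    calc dist y y' ≤ dist z y + dist z y' := dist_triangle_left _ _ _
    _ ≤ ε/2 + ε/2 := add_le_add h1.le h2.le
    _ = ε := by ring
  exact hy'.2 (hstep y hy.1 y' hy'.1 this)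

/-- Any chain inside a set can be replaced by one of length at most `2 P`,
where `P` bounds the cardinality of `ε`-separated sets. -/
lemma chain_bounded_length {X : Type*} [MetricSpace X] {ε : ℝ} (hε : 0 < ε) {W : Set X} {P : ℕ}
    (hP : ∀ s : Finset X, (∀ x ∈ s, ∀ y ∈ s, x ≠ y → ε < dist x y) → s.card ≤ P) :
    ∀ n (c : ℕ → X) (x x' : X), IsEpsChain ε n c x x' → (∀ i, c i ∈ W) →
    ∃ m c', m ≤ 2*P ∧ IsEpsChain ε m c' x x' ∧ ∀ i, c' i ∈ W := by
  intro n
  induction n using Nat.strong_induction_on with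
  | _ n IH =>
    intro c x x' hc hmem
    classical
    by_cases hshort : ∃ i j, i + 2 ≤ j ∧ j ≤ n ∧ dist (c i) (c j) ≤ ε
    · obtain ⟨i, j, hij, hjn, hd⟩ := hshort
      set d := j - i - 1 with hdd
      have hd1 : 1 ≤ d := by omega
      set c' : ℕ → X := fun k => if k ≤ i then c k else c (k + d) with hc'
      set n' : ℕ := n - d with hn'
      have hin' : i < n' := by omega
      have hchain' : IsEpsChain ε n' c' x x' := by
        obtain ⟨h0, hn, hs⟩ := hc
        refine ⟨by simp [hc', h0], ?_, ?_⟩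
        · rw [hc']
          simp only
          rw [if_neg (by omega), show n' + d = n by omega, hn]
        · intro k hk
          rw [hc']
          simp only
          rcases Nat.lt_or_ge k i with h' | h'
          · rw [if_pos h'.le, if_pos (by omega : k + 1 ≤ i)]
            exact hs k (by omega)
          rcases Nat.eq_or_lt_of_le h' with h'' | h''
          · rw [if_pos (by omega : k ≤ i), if_neg (by omega), ← h'',
              show i + 1 + d = j by omega]
            exact hd
          · rw [if_neg (by omega), if_neg (by omega), show k + 1 + d = k + d + 1 by omega]
            exact hs (k + d) (by omega)
      exact IH n' (by omega) c' x x' hchain' (fun k => by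
        rw [hc']; simp only; split <;> apply hmem)
    · push_neg at hshort
      refine ⟨n, c, ?_, hc, hmem⟩
      have hsep : ∀ a b, a < b → b ≤ n/2 → ε < dist (c (2*a)) (c (2*b)) :=
        fun a b hab hb => hshort (2*a) (2*b) (by omega) (by omega)
      have hinj : Set.InjOn (fun m => c (2*m)) (Finset.range (n/2+1)) := by
        intro a ha b hb hab
        have hab' : c (2 * a) = c (2 * b) := hab
        simp only [Finset.coe_range, Set.mem_Iio] at ha hb
        by_contra hne
        rcases Nat.lt_or_ge a b with h | h
        · have := hsep a b h (by omega)
          rw [hab'] at this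
          simp at this
          linarith
        · have := hsep b a (by omega) (by omega)
          rw [hab'] at this
          simp at this
          linarith
      have hcard : (Finset.image (fun m => c (2*m)) (Finset.range (n/2+1))).card = n/2+1 := by
        rw [Finset.card_image_of_injOn hinj, Finset.card_range]
      have := hP (Finset.image (fun m => c (2*m)) (Finset.range (n/2+1))) ?_
      · omega
      · intro u hu v hv huv
        simp only [Finset.mem_image, Finset.mem_range] at hu hv
        obtain ⟨a, ha, rfl⟩ := hu
        obtain ⟨b, hb, rfl⟩ := hv
        rcases Nat.lt_trichotomy a b with h | h | h
        · exact hsep a b h (by omega)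
        · exact absurd (by rw [h]) huv
        · rw [dist_comm]; exact hsep b a h (by omega)

/-- for an intrinsic isometry `ι` from a compact space, for every `ε > 0` there is
`δ > 0` such that every connected `W ⊆ X` with `diam ι(W) < δ` has `diam W < ε`. -/
theorem intrinsicIsometry_diam_control {X Y : Type*} [MetricSpace X] [CompactSpace X]
    [MetricSpace Y] (ι : X → Y) (hι : IsIntrinsicIsometry ι) (ε : ℝ) (hε : 0 < ε) :
    ∃ δ > (0 : ℝ), ∀ W : Set X, IsPreconnected W →
      EMetric.diam (ι '' W) < ENNReal.ofReal δ → EMetric.diam W < ENNReal.ofReal ε := by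
  obtain ⟨hcont, hpull⟩ := hι
  by_contra hcon
  push_neg at hcon
  -- extract a sequence of bad connected sets
  have hbad : ∀ k : ℕ, ∃ W : Set X, IsPreconnected W ∧
      EMetric.diam (ι '' W) < ENNReal.ofReal (1/(k+1)) ∧
      ¬ EMetric.diam W < ENNReal.ofReal ε := by
    intro k
    obtain ⟨W, hW1, hW2, hW3⟩ := hcon (1/(k+1)) (by positivity)
    exact ⟨W, hW1, hW2, not_lt.mpr hW3⟩
  choose W hWc hWd hWε using hbad
  -- extract far-apart pairs of points
  have hpq : ∀ k : ℕ, ∃ u ∈ W k, ∃ v ∈ W k, ENNReal.ofReal (ε/2) < edist u v := by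
    intro k
    by_contra h
    push_neg at h
    apply hWε k
    calc EMetric.diam (W k) ≤ ENNReal.ofReal (ε/2) := EMetric.diam_le h
    _ < ENNReal.ofReal ε := by
        rw [ENNReal.ofReal_lt_ofReal_iff hε]; linarith
  choose p hp q hq hpqd using hpq
  -- compactness: convergent subsequence of pairs
  obtain ⟨⟨a, b⟩, -, φ, hφ, hconv⟩ :=
    (isCompact_univ : IsCompact (Set.univ : Set (X × X))).tendsto_subseq
      (x := fun k => (p k, q k)) (fun k => Set.mem_univ _)
  have hpa : Tendsto (fun k => p (φ k)) atTop (𝓝 a) :=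
    (continuous_fst.tendsto (a, b)).comp hconv
  have hqb : Tendsto (fun k => q (φ k)) atTop (𝓝 b) :=
    (continuous_snd.tendsto (a, b)).comp hconv
  -- the limits are far apart
  have hdab : ε/2 ≤ dist a b := by
    have hd : Tendsto (fun k => dist (p (φ k)) (q (φ k))) atTop (𝓝 (dist a b)) :=
      hpa.dist hqb
    refine le_of_tendsto_of_tendsto' tendsto_const_nhds hd (fun k => ?_)
    have := hpqd (φ k)
    rw [edist_dist, ENNReal.ofReal_lt_ofReal_iff_of_nonneg (by linarith)] at this
    exact this.le
  have hedab : ENNReal.ofReal (ε/2) ≤ edist a b := by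
    rw [edist_dist]
    exact ENNReal.ofReal_le_ofReal hdab
  -- pick ε' with pullEps > ε/4
  have hsup : ENNReal.ofReal (ε/4) < pullMet ι a b := by
    rw [← hpull]
    calc ENNReal.ofReal (ε/4) < ENNReal.ofReal (ε/2) := by
          rw [ENNReal.ofReal_lt_ofReal_iff (by linarith)]; linarith
    _ ≤ edist a b := hedab
  rw [pullMet, lt_iSup_iff] at hsup
  obtain ⟨ε', hsup⟩ := hsup
  rw [lt_iSup_iff] at hsup
  obtain ⟨hε', hpe⟩ := hsup
  -- packing bound
  obtain ⟨P, hP⟩ := exists_pack_bound (X := X) hε'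
  set e0 : ℝ := ε / (16 * (P + 1)) with he0def
  have he0 : 0 < e0 := by positivity
  -- eventually conditions
  have hA : ∀ᶠ k in atTop, dist (p (φ k)) a < ε' :=
    (Metric.tendsto_nhds.mp hpa) ε' hε'
  have hB : ∀ᶠ k in atTop, dist (q (φ k)) b < ε' :=
    (Metric.tendsto_nhds.mp hqb) ε' hε'
  have hC : ∀ᶠ k in atTop, dist (ι (p (φ k))) (ι a) < e0 :=
    (Metric.tendsto_nhds.mp ((hcont.tendsto a).comp hpa)) e0 he0
  have hD : ∀ᶠ k in atTop, dist (ι (q (φ k))) (ι b) < e0 :=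
    (Metric.tendsto_nhds.mp ((hcont.tendsto b).comp hqb)) e0 he0
  have hE : ∀ᶠ k in atTop, (1:ℝ)/(φ k + 1) ≤ e0 := by
    obtain ⟨K0, hK0⟩ := exists_nat_gt (1/e0)
    refine eventually_atTop.mpr ⟨K0, fun k hk => ?_⟩
    have h1 : (K0:ℝ) ≤ φ k := by
      have h := (hφ.le_apply : k ≤ φ k)
      exact_mod_cast le_trans (Nat.cast_le.mpr hk) (Nat.cast_le.mpr h)
    have h2 : (1:ℝ)/e0 < φ k + 1 := by linarith
    rw [div_le_iff₀ (by positivity)]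
    rw [div_lt_iff₀ he0] at h2
    nlinarith
  obtain ⟨k, hkA, hkB, hkC, hkD, hkE⟩ := (hA.and (hB.and (hC.and (hD.and hE)))).exists
  set K := φ k with hK
  -- chain inside W K from p K to q K, of bounded length
  obtain ⟨n0, c0, hc0, hm0⟩ := preconnected_chain (hWc K) (hp K) (hq K) hε'
  obtain ⟨m, c, hmle, hcc, hcm⟩ := chain_bounded_length hε' hP n0 c0 _ _ hc0 hm0
  obtain ⟨hcc0, hccn, hccs⟩ := hcc
  -- build the full chain from a to b
  set dch : ℕ → X := fun i => if i = 0 then a else if i ≤ m + 1 then c (i-1) else b with hdch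
  have hd0 : dch 0 = a := by simp [hdch]
  have hdmid : ∀ i, 1 ≤ i → i ≤ m + 1 → dch i = c (i-1) := by
    intro i h1 h2
    rw [hdch]
    simp only
    rw [if_neg (by omega), if_pos h2]
  have hdlast : dch (m+2) = b := by
    rw [hdch]
    simp only
    rw [if_neg (by omega), if_neg (by omega)]
  have hchain : IsEpsChain ε' (m+2) dch a b := by
    refine ⟨hd0, hdlast, fun i hi => ?_⟩
    rcases Nat.eq_zero_or_pos i with rfl | hi0
    · rw [hd0, hdmid 1 (by omega) (by omega), show (1:ℕ) - 1 = 0 from rfl, hcc0, dist_comm]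
      exact hkA.le
    rcases Nat.lt_or_ge i (m+1) with h' | h'
    · rw [hdmid i (by omega) (by omega), hdmid (i+1) (by omega) (by omega),
        show i + 1 - 1 = (i-1) + 1 by omega]
      exact hccs (i-1) (by omega)
    · have : i = m + 1 := by omega
      subst this
      rw [hdmid (m+1) (by omega) le_rfl, hdlast, show m + 1 - 1 = m from by omega, hccn]
      exact hkB.le
  -- bound pullEps via this chain
  have hle : pullEps ι ε' a b ≤
      ∑ i ∈ Finset.range (m+2), edist (ι (dch i)) (ι (dch (i+1))) := by
    unfold pullEps
    exact iInf_le_of_le (m+2) (iInf_le_of_le dch (iInf_le _ hchain))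
  have hDW : EMetric.diam (ι '' W K) ≤ ENNReal.ofReal e0 := by
    refine le_trans (hWd K).le (ENNReal.ofReal_le_ofReal ?_)
    exact hkE
  have hterm : ∀ i ∈ Finset.range (m+2),
      edist (ι (dch i)) (ι (dch (i+1))) ≤ ENNReal.ofReal e0 := by
    intro i hi
    rw [Finset.mem_range] at hi
    rcases Nat.eq_zero_or_pos i with rfl | hi0
    · rw [hd0, hdmid 1 (by omega) (by omega), show (1:ℕ) - 1 = 0 from rfl, hcc0]
      rw [edist_dist]
      refine ENNReal.ofReal_le_ofReal ?_
      rw [dist_comm]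
      exact hkC.le
    rcases Nat.lt_or_ge i (m+1) with h' | h'
    · rw [hdmid i (by omega) (by omega), hdmid (i+1) (by omega) (by omega)]
      refine le_trans ?_ hDW
      exact EMetric.edist_le_diam_of_mem
        (Set.mem_image_of_mem ι (hcm (i-1))) (Set.mem_image_of_mem ι (hcm (i+1-1)))
    · have : i = m + 1 := by omega
      subst this
      rw [hdmid (m+1) (by omega) le_rfl, hdlast, show m + 1 - 1 = m from by omega, hccn]
      rw [edist_dist]
      exact ENNReal.ofReal_le_ofReal hkD.le
  have hsum : ∑ i ∈ Finset.range (m+2), edist (ι (dch i)) (ι (dch (i+1)))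
      ≤ ENNReal.ofReal (ε/8) := by
    calc ∑ i ∈ Finset.range (m+2), edist (ι (dch i)) (ι (dch (i+1)))
        ≤ (Finset.range (m+2)).card • ENNReal.ofReal e0 :=
          Finset.sum_le_card_nsmul _ _ _ hterm
    _ = (m+2 : ℕ) * ENNReal.ofReal e0 := by rw [Finset.card_range, nsmul_eq_mul]
    _ = ENNReal.ofReal ((m+2) * e0) := by
        rw [ENNReal.ofReal_mul (by positivity)]
        congr 1
        rw [← ENNReal.ofReal_natCast (m+2)]
        push_cast
        ring_nf
    _ ≤ ENNReal.ofReal (ε/8) := by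
        refine ENNReal.ofReal_le_ofReal ?_
        have hm2 : ((m:ℝ)+2) ≤ 2*(P:ℝ)+2 := by
          have : (m:ℝ) ≤ 2*(P:ℝ) := by exact_mod_cast hmle
          linarith
        have heq : (2*(P:ℝ)+2) * e0 = ε/8 := by
          rw [he0def]
          field_simp
          ring
        nlinarith
  have : pullEps ι ε' a b < pullEps ι ε' a b := by
    calc pullEps ι ε' a b ≤ ENNReal.ofReal (ε/8) := le_trans hle hsum
    _ < ENNReal.ofReal (ε/4) := by
        rw [ENNReal.ofReal_lt_ofReal_iff (by linarith)]; linarith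
    _ < pullEps ι ε' a b := hpe
  exact lt_irrefl _ this
end

section
/- If a compact metric space X admits an intrinsic isometry into the d-dimensional Euclidean space ℝ^d, then the Lebesgue covering dimension of X is at most d. -/
open Filter
open scoped ENNReal

/-- Lebesgue covering dimension `≤ d`: every finite open cover admits a finite open refinement
of multiplicity `≤ d + 1`. -/
def CovDimLE (X : Type*) [TopologicalSpace X] (d : ℕ) : Prop :=
  ∀ (n : ℕ) (U : Fin n → Set X), (∀ i, IsOpen (U i)) → (⋃ i, U i) = Set.univ →
    ∃ (m : ℕ) (V : Fin m → Set X), (∀ j, IsOpen (V j)) ∧ (⋃ j, V j) = Set.univ ∧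
      (∀ j, ∃ i, V j ⊆ U i) ∧
      ∀ x : X, ({j : Fin m | x ∈ V j}).ncard ≤ d + 1

open Topology
open scoped NNReal

/-!
Cover `ℝ^d` by `d + 1` families of small open bricks, the bricks of each family pairwise
disjoint: a point misses family `k` only if one of its `d` coordinates lies in a gap of that
family, and a coordinate lies in a gap of at most one family. Pull the bricks back along `ι` and
split each preimage into its `ε`-chain components; these are open, components of one family are
disjoint, so the multiplicity is at most `d + 1`. Two points of one component are joined inside it
by an `ε`-chain with at most `2 N` steps (`N` the `ε`-packing number of `X`: a shortest chain has
`ε`-separated even-indexed points), so their `pull_{ι,ε}`-distance is at most `2 N` times the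
diameter of the brick. Since `pull_{ι,ε}` converges to the metric of `X` uniformly on the compact
`X × X` as `ε → 0`, the components are then uniformly small, and a Lebesgue number argument
produces the refinement.
-/

structure IsColoredOpenCover {ι X : Type*} [TopologicalSpace X] (𝒰 : ι → Set (Set X)) :
    Prop where
  isOpen : ∀ k, ∀ U ∈ 𝒰 k, IsOpen U
  pairwiseDisjoint : ∀ k, (𝒰 k).PairwiseDisjoint id
  exists_mem : ∀ x, ∃ k, ∃ U ∈ 𝒰 k, x ∈ U

theorem covDimLE_of_forall_isColoredOpenCover {X : Type*} [MetricSpace X] [CompactSpace X]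
    {d : ℕ} (h : ∀ δ > 0, ∃ 𝒰 : Fin (d + 1) → Set (Set X), IsColoredOpenCover 𝒰 ∧
      ∀ k, ∀ U ∈ 𝒰 k, ∀ x ∈ U, ∀ y ∈ U, dist x y < δ) :
    CovDimLE X d := by
  intro n U hU hcov
  obtain ⟨δ, hδ, hleb⟩ := lebesgue_number_lemma_of_metric isCompact_univ hU hcov.ge
  obtain ⟨𝒰, h𝒰, hmesh⟩ := h δ hδ
  -- empty members are left out: they would need some `U i` to lie in, and there may be none
  obtain ⟨t, ht⟩ := isCompact_univ.elim_finite_subcover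
    (fun p : {p : Fin (d + 1) × Set X // p.2 ∈ 𝒰 p.1 ∧ p.2.Nonempty} => p.1.2)
    (fun p => h𝒰.isOpen _ _ p.2.1) fun x _ => by
      obtain ⟨k, W, hW, hx⟩ := h𝒰.exists_mem x
      exact Set.mem_iUnion.2 ⟨⟨(k, W), hW, x, hx⟩, hx⟩
  let p := fun j => (t.equivFin.symm j).1
  refine ⟨t.card, fun j => (p j).1.2, fun j => h𝒰.isOpen _ _ (p j).2.1, ?_, fun j => ?_,
    fun x => ?_⟩
  · refine Set.eq_univ_of_forall fun x => ?_
    obtain ⟨q, hq, hx⟩ := Set.mem_iUnion₂.1 (ht (Set.mem_univ x))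
    exact Set.mem_iUnion.2 ⟨t.equivFin ⟨q, hq⟩, by simpa [p] using hx⟩
  · obtain ⟨a, ha⟩ := (p j).2.2
    obtain ⟨i, hi⟩ := hleb a trivial
    exact ⟨i, fun z hz => hi (Metric.mem_ball.2 (hmesh _ _ (p j).2.1 z hz a ha))⟩
  · have hinj : Set.InjOn (fun j => (p j).1.1) {j | x ∈ (p j).1.2} := by
      intro j hj j' hj' hk
      have hW := (p j).2.1
      rw [show (p j).1.1 = (p j').1.1 from hk] at hW
      have hWW' := (h𝒰.pairwiseDisjoint _).elim_set hW (p j').2.1 x hj hj'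
      exact t.equivFin.symm.injective (Subtype.ext (Subtype.ext (Prod.ext hk hWW')))
    calc _ ≤ (Set.univ : Set (Fin (d + 1))).ncard :=
          Set.ncard_le_ncard_of_injOn _ (fun _ _ => trivial) hinj Set.finite_univ
      _ = d + 1 := by simp

section Bricks

-- Intervals of one family have length `d + 1/2` and period `d + 1`; the gaps between them,
-- of length `1/2`, are shifted by `1` from one family to the next.
def brickInterval (d k : ℕ) (m : ℤ) : Set ℝ :=
  Set.Ioo ((d + 1) * m + k - 1 / 4) ((d + 1) * m + k + d + 1 / 4)

variable {d k : ℕ} {t t' : ℝ} {m m' : ℤ}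

lemma exists_mem_brickInterval (hk : k ≤ d) (h : (k : ℤ) ≠ (⌊t - 1 / 4⌋ + 1) % (d + 1)) :
    ∃ m, t ∈ brickInterval d k m := by
  set a := ⌊t - 1 / 4⌋
  have ha₁ : (a : ℝ) ≤ t - 1 / 4 := Int.floor_le _
  have ha₂ : t - 1 / 4 < a + 1 := Int.lt_floor_add_one _
  have hdiv := Int.emod_add_mul_ediv (a - k) (d + 1)
  set r := (a - k) % (d + 1)
  set m := (a - k) / (d + 1)
  have hr₀ : 0 ≤ r := Int.emod_nonneg _ (by omega)
  have hrd : r < d := by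
    have hr : r < d + 1 := Int.emod_lt_of_pos _ (by omega)
    refine lt_of_le_of_ne (by omega) fun hrd => h ?_
    rw [show a + 1 = k + (d + 1) * (m + 1) by linear_combination hrd - hdiv,
      Int.add_mul_emod_self_left, Int.emod_eq_of_lt (by omega) (by omega)]
  have hm : ((d : ℝ) + 1) * m + k = a - r := by
    have h := congrArg (Int.cast : ℤ → ℝ) hdiv
    push_cast at h
    linarith
  have hr₀' : (0 : ℝ) ≤ r := by exact_mod_cast hr₀
  have hrd' : (r : ℝ) + 1 ≤ d := by exact_mod_cast hrd
  exact ⟨m, by linarith, by linarith⟩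

lemma le_of_mem_brickInterval (h : t ∈ brickInterval d k m) (h' : t ∈ brickInterval d k m') :
    m ≤ m' := by
  have hlt : ((d : ℝ) + 1) * (m - m') < (d + 1) * 1 := by linarith [h.1, h'.2]
  have : ((m - m' : ℤ) : ℝ) < (1 : ℤ) := by
    push_cast; exact lt_of_mul_lt_mul_left hlt (by positivity)
  have := Int.cast_lt.1 this
  omega

lemma abs_sub_le_of_mem_brickInterval (h : t ∈ brickInterval d k m)
    (h' : t' ∈ brickInterval d k m) : |t - t'| ≤ d + 1 := by
  rw [abs_le]; constructor <;> linarith [h.1, h.2, h'.1, h'.2]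

def brick (d : ℕ) (s : ℝ) (k : ℕ) (m : Fin d → ℤ) : Set (EuclideanSpace ℝ (Fin d)) :=
  ⋂ i, (fun y => y i / s) ⁻¹' brickInterval d k (m i)

lemma dist_le_of_mem_brick {s : ℝ} (hs : 0 < s) {m : Fin d → ℤ}
    {y y' : EuclideanSpace ℝ (Fin d)} (hy : y ∈ brick d s k m) (hy' : y' ∈ brick d s k m) :
    dist y y' ≤ (d + 1) ^ 2 * s := by
  have hcoord : ∀ i, dist (y i) (y' i) ≤ (d + 1) * s := by
    intro i
    have := abs_sub_le_of_mem_brickInterval (Set.mem_iInter.1 hy i) (Set.mem_iInter.1 hy' i)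
    rwa [← sub_div, abs_div, abs_of_pos hs, div_le_iff₀ hs, ← Real.dist_eq] at this
  have hd : (d : ℝ) ≤ (d + 1) ^ 2 := by nlinarith
  rw [EuclideanSpace.dist_eq, ← Real.sqrt_sq (by positivity : (0 : ℝ) ≤ (d + 1) ^ 2 * s)]
  refine Real.sqrt_le_sqrt ?_
  calc ∑ i, dist (y i) (y' i) ^ 2 ≤ ∑ _i : Fin d, ((d + 1) * s) ^ 2 :=
        Finset.sum_le_sum fun i _ => pow_le_pow_left₀ dist_nonneg (hcoord i) 2
    _ = d * ((d + 1) * s) ^ 2 := by simp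
    _ ≤ (d + 1) ^ 2 * ((d + 1) * s) ^ 2 := by gcongr
    _ = ((d + 1) ^ 2 * s) ^ 2 := by ring

theorem exists_isColoredOpenCover_euclideanSpace (d : ℕ) {D : ℝ} (hD : 0 < D) :
    ∃ 𝒱 : Fin (d + 1) → Set (Set (EuclideanSpace ℝ (Fin d))), IsColoredOpenCover 𝒱 ∧
      ∀ k, ∀ V ∈ 𝒱 k, ∀ y ∈ V, ∀ y' ∈ V, dist y y' ≤ D := by
  set s := D / (d + 1) ^ 2 with hs_def
  have hs : 0 < s := by positivity
  refine ⟨fun k => Set.range (brick d s k), ⟨?_, fun k => ?_, fun y => ?_⟩, ?_⟩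
  · rintro k _ ⟨m, rfl⟩
    exact isOpen_iInter_of_finite fun i => isOpen_Ioo.preimage (by fun_prop)
  · rintro _ ⟨m, rfl⟩ _ ⟨m', rfl⟩ hne
    refine Set.disjoint_left.2 fun y hy hy' => hne (congrArg _ (funext fun i => ?_))
    have hi := Set.mem_iInter.1 hy i
    have hi' := Set.mem_iInter.1 hy' i
    exact le_antisymm (le_of_mem_brickInterval hi hi') (le_of_mem_brickInterval hi' hi)
  · -- each coordinate rules out at most one family, and there are `d` coordinates
    obtain ⟨k, hk⟩ : ∃ k : Fin (d + 1), ∀ i, (k : ℤ) ≠ (⌊y i / s - 1 / 4⌋ + 1) % (d + 1) := by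
      by_contra! h
      choose g hg using h
      have hg : Function.Injective g := fun k k' hkk' => by
        have h := hg k
        rw [hkk', ← hg k'] at h
        exact Fin.ext (by exact_mod_cast h)
      simpa using Fintype.card_le_of_injective g hg
    choose m hm using fun i => exists_mem_brickInterval (Nat.lt_succ_iff.1 k.2) (hk i)
    exact ⟨k, _, ⟨m, rfl⟩, Set.mem_iInter.2 hm⟩
  · rintro k _ ⟨m, rfl⟩ y hy y' hy'
    exact (dist_le_of_mem_brick hs hy hy').trans_eq (by rw [hs_def]; field_simp)

end Bricks

section ChainAppend

variable {X Y : Type*} [EDist Y] {S : Set X} {n₁ n₂ : ℕ} {c₁ c₂ : ℕ → X}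

def chainAppend (n₁ : ℕ) (c₁ c₂ : ℕ → X) : ℕ → X :=
  fun i => if i ≤ n₁ then c₁ i else c₂ (i - n₁)

lemma chainAppend_of_le {i : ℕ} (hi : i ≤ n₁) : chainAppend n₁ c₁ c₂ i = c₁ i := if_pos hi

lemma chainAppend_add (h : c₁ n₁ = c₂ 0) (i : ℕ) : chainAppend n₁ c₁ c₂ (n₁ + i) = c₂ i := by
  rcases Nat.eq_zero_or_pos i with rfl | hi
  · simpa [chainAppend] using h
  · simp [chainAppend, show ¬n₁ + i ≤ n₁ by omega]

lemma chainAppend_mem (h₁ : ∀ i ≤ n₁, c₁ i ∈ S) (h₂ : ∀ i ≤ n₂, c₂ i ∈ S) :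
    ∀ i ≤ n₁ + n₂, chainAppend n₁ c₁ c₂ i ∈ S := by
  intro i hi
  unfold chainAppend
  split_ifs with h
  exacts [h₁ i h, h₂ _ (by omega)]

lemma sum_chainAppend (f : X → Y) (hy : c₁ n₁ = c₂ 0) :
    ∑ i ∈ Finset.range (n₁ + n₂), edist (f (chainAppend n₁ c₁ c₂ i))
        (f (chainAppend n₁ c₁ c₂ (i + 1))) =
      (∑ i ∈ Finset.range n₁, edist (f (c₁ i)) (f (c₁ (i + 1)))) +
        ∑ i ∈ Finset.range n₂, edist (f (c₂ i)) (f (c₂ (i + 1))) := by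
  rw [Finset.sum_range_add]
  congr 1
  · refine Finset.sum_congr rfl fun i hi => ?_
    have hi := Finset.mem_range.1 hi
    rw [chainAppend_of_le hi.le, chainAppend_of_le hi]
  · refine Finset.sum_congr rfl fun i _ => ?_
    rw [chainAppend_add hy, add_assoc, chainAppend_add hy]

end ChainAppend

section Metric

variable {X Y : Type*} [MetricSpace X] [MetricSpace Y] {ε : ℝ} {S : Set X}
  {n n₁ n₂ : ℕ} {c c₁ c₂ : ℕ → X} {x y z : X}

lemma IsEpsChain.append (h₁ : IsEpsChain ε n₁ c₁ x y) (h₂ : IsEpsChain ε n₂ c₂ y z) :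
    IsEpsChain ε (n₁ + n₂) (chainAppend n₁ c₁ c₂) x z := by
  have hy : c₁ n₁ = c₂ 0 := h₁.2.1.trans h₂.1.symm
  refine ⟨(chainAppend_of_le (Nat.zero_le _)).trans h₁.1, (chainAppend_add hy n₂).trans h₂.2.1,
    fun i hi => ?_⟩
  by_cases hin : i < n₁
  · rw [chainAppend_of_le hin.le, chainAppend_of_le hin]
    exact h₁.2.2 i hin
  · obtain ⟨j, rfl⟩ := Nat.exists_eq_add_of_le (not_lt.1 hin)
    rw [chainAppend_add hy, add_assoc, chainAppend_add hy]
    exact h₂.2.2 j (by omega)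

lemma isEpsChain_pair (h : dist x y ≤ ε) :
    IsEpsChain ε 1 (fun i => if i = 0 then x else y) x y :=
  ⟨rfl, rfl, fun i hi => by simpa [Nat.lt_one_iff.1 hi] using h⟩

lemma IsEpsChain.take (hc : IsEpsChain ε n c x y) {i : ℕ} (hi : i ≤ n) :
    IsEpsChain ε i c x (c i) :=
  ⟨hc.1, rfl, fun j hj => hc.2.2 j (by omega)⟩

lemma IsEpsChain.drop (hc : IsEpsChain ε n c x y) {j : ℕ} (hj : j ≤ n) :
    IsEpsChain ε (n - j) (fun t => c (j + t)) (c j) y :=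
  ⟨rfl, by simpa [Nat.add_sub_cancel' hj] using hc.2.1, fun t ht => hc.2.2 (j + t) (by omega)⟩

lemma IsEpsChain.reverse (hc : IsEpsChain ε n c x y) :
    IsEpsChain ε n (fun i => c (n - i)) y x := by
  refine ⟨by simpa using hc.2.1, by simpa using hc.1, fun i hi => ?_⟩
  show dist (c (n - i)) (c (n - (i + 1))) ≤ ε
  rw [dist_comm, show n - i = n - (i + 1) + 1 by omega]
  exact hc.2.2 _ (by omega)

section PullEps

variable (f : X → Y)

lemma pullEps_le_sum (hc : IsEpsChain ε n c x y) :
    pullEps f ε x y ≤ ∑ i ∈ Finset.range n, edist (f (c i)) (f (c (i + 1))) :=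
  iInf₂_le_of_le n c (iInf_le _ hc)

lemma edist_le_pullEps (ε : ℝ) (x y : X) : edist (f x) (f y) ≤ pullEps f ε x y := by
  refine le_iInf₂ fun n c => le_iInf fun hc => ?_
  simpa only [Function.comp, hc.1, hc.2.1] using edist_le_range_sum_edist (f ∘ c) n

lemma pullEps_le_edist (h : dist x y ≤ ε) : pullEps f ε x y ≤ edist (f x) (f y) := by
  simpa using pullEps_le_sum f (isEpsChain_pair h)

lemma pullEps_anti {ε ε' : ℝ} (h : ε ≤ ε') (x y : X) : pullEps f ε' x y ≤ pullEps f ε x y :=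
  le_iInf₂ fun _ _ => le_iInf fun hc =>
    pullEps_le_sum f ⟨hc.1, hc.2.1, fun i hi => (hc.2.2 i hi).trans h⟩

lemma pullEps_triangle (ε : ℝ) (x y z : X) :
    pullEps f ε x z ≤ pullEps f ε x y + pullEps f ε y z := by
  simp only [pullEps, ENNReal.iInf_add, ENNReal.add_iInf, le_iInf_iff]
  intro n₂ c₂ h₂ n₁ c₁ h₁
  rw [← sum_chainAppend f (h₁.2.1.trans h₂.1.symm)]
  exact pullEps_le_sum f (IsEpsChain.append h₁ h₂)

lemma pullEps_le_edist_add_pullEps_add_edist {a b : X} (ha : dist x a ≤ ε) (hb : dist b y ≤ ε) :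
    pullEps f ε x y ≤ edist (f x) (f a) + pullEps f ε a b + edist (f b) (f y) :=
  calc pullEps f ε x y ≤ pullEps f ε x a + pullEps f ε a b + pullEps f ε b y :=
        (pullEps_triangle f ε x b y).trans (by gcongr; exact pullEps_triangle f ε x a b)
    _ ≤ _ := by gcongr <;> exact pullEps_le_edist f ‹_›

lemma pullEps_le_pullMet (hε : 0 < ε) (x y : X) : pullEps f ε x y ≤ pullMet f x y :=
  le_iSup₂ (f := fun ε (_ : 0 < ε) => pullEps f ε x y) ε hε

end PullEps

namespace IsIntrinsicIsometry

variable {f : X → Y}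

lemma edist_le (hf : IsIntrinsicIsometry f) (x y : X) : edist (f x) (f y) ≤ edist x y :=
  (edist_le_pullEps f 1 x y).trans ((pullEps_le_pullMet f one_pos x y).trans (hf.2 x y).ge)

lemma exists_edist_lt_pullEps_add (hf : IsIntrinsicIsometry f) (x y : X) {η : ℝ≥0∞}
    (hη : 0 < η) :
    ∃ ε > 0, edist x y < pullEps f ε x y + η := by
  have : edist x y < ⨆ ε, ⨆ _ : 0 < ε, pullEps f ε x y + η := by
    rw [← ENNReal.biSup_add' ⟨1, one_pos⟩, ← pullMet, ← hf.2 x y]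
    exact ENNReal.lt_add_right (edist_ne_top x y) hη.ne'
  simpa only [lt_iSup_iff, exists_prop] using this

lemma eventually_edist_le_pullEps_add (hf : IsIntrinsicIsometry f) {ρ : ℝ≥0∞} (hρ : 0 < ρ)
    (p : X × X) :
    ∃ ε > 0, ∀ᶠ q in 𝓝 p, edist q.1 q.2 ≤ pullEps f ε q.1 q.2 + ρ := by
  set η := ρ / 5
  have hη : 0 < η := ENNReal.div_pos hρ.ne' (by norm_num)
  obtain ⟨ε, hε, hp⟩ := hf.exists_edist_lt_pullEps_add p.1 p.2 hη
  refine ⟨ε, hε, ?_⟩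
  filter_upwards [Metric.eball_mem_nhds p (lt_min (ENNReal.ofReal_pos.2 hε) hη)] with q hq
  rw [Metric.mem_eball, Prod.edist_eq, max_lt_iff, lt_min_iff, lt_min_iff] at hq
  obtain ⟨⟨h₁ε, h₁η⟩, h₂ε, h₂η⟩ := hq
  have h₁ : edist p.1 q.1 ≤ η := by rw [edist_comm]; exact h₁η.le
  have hpull := pullEps_le_edist_add_pullEps_add_edist f
    (by rw [dist_comm]; exact (edist_lt_ofReal.1 h₁ε).le) (edist_lt_ofReal.1 h₂ε).le
  calc edist q.1 q.2 ≤ edist q.1 p.1 + edist p.1 p.2 + edist p.2 q.2 := edist_triangle4 _ _ _ _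
    _ ≤ η + (pullEps f ε p.1 p.2 + η) + η := by
        rw [edist_comm q.1, edist_comm p.2]
        exact add_le_add (add_le_add h₁ hp.le) h₂η.le
    _ ≤ η + ((η + pullEps f ε q.1 q.2 + η) + η) + η := by
        gcongr
        refine hpull.trans (add_le_add (add_le_add ?_ le_rfl) ?_)
        exacts [(hf.edist_le _ _).trans h₁, (hf.edist_le _ _).trans h₂η.le]
    _ = pullEps f ε q.1 q.2 + 5 * η := by ring
    _ ≤ pullEps f ε q.1 q.2 + ρ := by gcongr; exact ENNReal.mul_div_le

lemma exists_forall_edist_le_pullEps_add [CompactSpace X] (hf : IsIntrinsicIsometry f)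
    {ρ : ℝ≥0∞} (hρ : 0 < ρ) :
    ∃ ε > 0, ∀ x y, edist x y ≤ pullEps f ε x y + ρ := by
  have key : ∀ᶠ ε in 𝓝 (0 : ℝ), ∀ p ∈ (Set.univ : Set (X × X)),
      0 < ε → edist p.1 p.2 ≤ pullEps f ε p.1 p.2 + ρ := by
    refine isCompact_univ.eventually_forall_of_forall_eventually fun p _ => ?_
    obtain ⟨ε₀, hε₀, hp⟩ := hf.eventually_edist_le_pullEps_add hρ p
    filter_upwards [(eventually_lt_nhds hε₀).prodMk_nhds hp] with z ⟨hz, hzp⟩ _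
    exact hzp.trans (by gcongr; exact pullEps_anti f (le_of_lt hz) _ _)
  obtain ⟨ε, hε, hε₀⟩ := ((key.filter_mono nhdsWithin_le_nhds).and
    (self_mem_nhdsWithin : Set.Ioi (0 : ℝ) ∈ 𝓝[>] 0)).exists
  exact ⟨ε, hε₀, fun x y => hε (x, y) trivial hε₀⟩

end IsIntrinsicIsometry

section EpsChainClass

open Metric

def epsChainClass (ε : ℝ) (S : Set X) (x : X) : Set X :=
  {y | ∃ n c, IsEpsChain ε n c x y ∧ ∀ i ≤ n, c i ∈ S}

lemma mem_epsChainClass_self (hx : x ∈ S) : x ∈ epsChainClass ε S x :=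
  ⟨0, fun _ => x, ⟨rfl, rfl, fun _ h => absurd h (Nat.not_lt_zero _)⟩, fun _ _ => hx⟩

lemma epsChainClass_subset : epsChainClass ε S x ⊆ S :=
  fun _ ⟨n, _, hc, hS⟩ => hc.2.1 ▸ hS n le_rfl

lemma mem_epsChainClass_comm (hy : y ∈ epsChainClass ε S x) : x ∈ epsChainClass ε S y :=
  let ⟨n, _, hc, hS⟩ := hy
  ⟨n, _, hc.reverse, fun _ _ => hS _ (Nat.sub_le _ _)⟩

lemma mem_epsChainClass_trans (hy : y ∈ epsChainClass ε S x) (hz : z ∈ epsChainClass ε S y) :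
    z ∈ epsChainClass ε S x :=
  let ⟨_, _, h₁, hS₁⟩ := hy
  let ⟨_, _, h₂, hS₂⟩ := hz
  ⟨_, _, h₁.append h₂, chainAppend_mem hS₁ hS₂⟩

lemma epsChainClass_eq_of_mem (hy : y ∈ epsChainClass ε S x) :
    epsChainClass ε S y = epsChainClass ε S x :=
  Set.ext fun _ => ⟨mem_epsChainClass_trans hy,
    mem_epsChainClass_trans (mem_epsChainClass_comm hy)⟩

lemma isOpen_epsChainClass (hε : 0 < ε) (hS : IsOpen S) (x : X) :
    IsOpen (epsChainClass ε S x) := by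
  refine Metric.isOpen_iff.2 fun y hy => ?_
  obtain ⟨r, hr, hball⟩ := Metric.isOpen_iff.1 hS y (epsChainClass_subset hy)
  refine ⟨min r ε, lt_min hr hε, fun z hz => mem_epsChainClass_trans hy ?_⟩
  rw [mem_ball, lt_min_iff] at hz
  refine ⟨1, _, isEpsChain_pair (dist_comm y z ▸ hz.2.le), fun i _ => ?_⟩
  split_ifs
  exacts [epsChainClass_subset hy, hball (mem_ball.2 hz.1)]

lemma IsEpsChain.shortcut (hc : IsEpsChain ε n c x y) (hS : ∀ i ≤ n, c i ∈ S) {i j : ℕ}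
    (hij : i ≤ j) (hjn : j ≤ n) (h : dist (c i) (c j) ≤ ε) :
    ∃ c', IsEpsChain ε (i + (1 + (n - j))) c' x y ∧ ∀ t ≤ i + (1 + (n - j)), c' t ∈ S := by
  refine ⟨_, (hc.take (hij.trans hjn)).append ((isEpsChain_pair h).append (hc.drop hjn)),
    chainAppend_mem (fun t ht => hS t (by omega)) (chainAppend_mem (fun t _ => ?_)
      (fun t ht => hS (j + t) (by omega)))⟩
  split_ifs
  exacts [hS i (hij.trans hjn), hS j hjn]

lemma packingNumber_univ_ne_top [CompactSpace X] {ε : ℝ≥0} (hε : ε ≠ 0) :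
    packingNumber ε (Set.univ : Set X) ≠ ⊤ := by
  obtain ⟨C, -, hCfin, hC⟩ :=
    exists_finite_isCover_of_isCompact (ε := ε / 2) (by simpa using hε) (isCompact_univ (X := X))
  refine ne_top_of_le_ne_top hCfin.encard_lt_top.ne ?_
  calc packingNumber ε Set.univ = packingNumber (2 * (ε / 2)) Set.univ := by
        rw [mul_div_cancel₀ _ two_ne_zero]
    _ ≤ externalCoveringNumber (ε / 2) Set.univ :=
        packingNumber_two_mul_le_externalCoveringNumber _ _
    _ ≤ C.encard := hC.externalCoveringNumber_le_encard

lemma exists_isEpsChain_length_le_of_mem_epsChainClass (hε : 0 < ε) {N : ℕ}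
    (hN : packingNumber ε.toNNReal (Set.univ : Set X) ≤ N) (hy : y ∈ epsChainClass ε S x) :
    ∃ n ≤ 2 * N, ∃ c, IsEpsChain ε n c x y ∧ ∀ i ≤ n, c i ∈ S := by
  classical
  have hP : ∃ n c, IsEpsChain ε n c x y ∧ ∀ i ≤ n, c i ∈ S := hy
  obtain ⟨c, hc, hS⟩ := Nat.find_spec hP
  set n := Nat.find hP
  refine ⟨n, ?_, c, hc, hS⟩
  -- a shortest chain cannot skip ahead, so its points two or more steps apart are `ε`-far
  have hsep : ∀ i j, i + 2 ≤ j → j ≤ n → ε < dist (c i) (c j) := by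
    intro i j hij hjn
    by_contra! h
    exact Nat.find_min hP (by omega) (hc.shortcut hS (by omega) hjn h)
  have heven : ∀ t ∈ Finset.range (n / 2 + 1), ∀ t' ∈ Finset.range (n / 2 + 1), t ≠ t' →
      ε < dist (c (2 * t)) (c (2 * t')) := by
    intro t ht t' ht' htt'
    simp only [Finset.mem_range] at ht ht'
    rcases htt'.lt_or_gt with h | h
    · exact hsep _ _ (by omega) (by omega)
    · exact dist_comm (c (2 * t)) _ ▸ hsep _ _ (by omega) (by omega)
  have hinj : Set.InjOn (fun t => c (2 * t)) (Finset.range (n / 2 + 1)) := by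
    intro t ht t' ht' he
    by_contra htt'
    have := heven t ht t' ht' htt'
    simp only at he
    rw [he, dist_self] at this
    linarith
  have hA : IsSeparated (ε.toNNReal : ℝ≥0∞)
      (((Finset.range (n / 2 + 1)).image fun t => c (2 * t) : Finset X) : Set X) := by
    rintro _ ha _ hb hab
    simp only [Finset.coe_image, Set.mem_image, Finset.mem_coe] at ha hb
    obtain ⟨t, ht, rfl⟩ := ha
    obtain ⟨t', ht', rfl⟩ := hb
    have := heven t ht t' ht' (by rintro rfl; exact hab rfl)
    rw [edist_dist]
    exact (ENNReal.ofReal_lt_ofReal_iff (hε.trans this)).2 this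
  have hcard := hA.encard_le_packingNumber (Set.subset_univ _)
  rw [Set.encard_coe_eq_coe_finsetCard, Finset.card_image_of_injOn hinj,
    Finset.card_range] at hcard
  have : n / 2 + 1 ≤ N := by exact_mod_cast hcard.trans hN
  omega

end EpsChainClass

section PullBack

def epsChainClasses (f : X → Y) (ε : ℝ) (𝒱 : Set (Set Y)) : Set (Set X) :=
  {C | ∃ B ∈ 𝒱, ∃ x ∈ f ⁻¹' B, epsChainClass ε (f ⁻¹' B) x = C}

lemma IsColoredOpenCover.epsChainClasses {ι : Type*} {𝒱 : ι → Set (Set Y)}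
    (h𝒱 : IsColoredOpenCover 𝒱) {f : X → Y} (hf : Continuous f) (hε : 0 < ε) :
    IsColoredOpenCover fun k => epsChainClasses f ε (𝒱 k) where
  isOpen := by
    rintro k _ ⟨B, hB, x, -, rfl⟩
    exact isOpen_epsChainClass hε ((h𝒱.isOpen k B hB).preimage hf) x
  pairwiseDisjoint := by
    rintro k _ ⟨B, hB, x, -, rfl⟩ _ ⟨B', hB', x', -, rfl⟩ hne
    refine Set.disjoint_left.2 fun z hz hz' => hne ?_
    have hzB : z ∈ f ⁻¹' B := epsChainClass_subset hz
    have hzB' : z ∈ f ⁻¹' B' := epsChainClass_subset hz'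
    obtain rfl : B = B' := (h𝒱.pairwiseDisjoint k).elim_set hB hB' (f z) hzB hzB'
    exact (epsChainClass_eq_of_mem hz).symm.trans (epsChainClass_eq_of_mem hz')
  exists_mem x := by
    obtain ⟨k, B, hB, hx⟩ := h𝒱.exists_mem (f x)
    exact ⟨k, _, ⟨B, hB, x, hx, rfl⟩, mem_epsChainClass_self hx⟩

lemma pullEps_le_of_mem_epsChainClass (f : X → Y) (hε : 0 < ε) {N : ℕ}
    (hN : Metric.packingNumber ε.toNNReal (Set.univ : Set X) ≤ N) {B : Set Y} {D : ℝ}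
    (hB : ∀ y ∈ B, ∀ y' ∈ B, dist y y' ≤ D) (hy : y ∈ epsChainClass ε (f ⁻¹' B) x) :
    pullEps f ε x y ≤ ENNReal.ofReal (2 * N * D) := by
  obtain ⟨n, hn, c, hc, hS⟩ := exists_isEpsChain_length_le_of_mem_epsChainClass hε hN hy
  have hx : x ∈ f ⁻¹' B := epsChainClass_subset (mem_epsChainClass_comm hy)
  have hD : 0 ≤ D := dist_self (f x) ▸ hB _ hx _ hx
  calc pullEps f ε x y ≤ ∑ i ∈ Finset.range n, edist (f (c i)) (f (c (i + 1))) :=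
        pullEps_le_sum f hc
    _ ≤ ∑ _i ∈ Finset.range n, ENNReal.ofReal D := Finset.sum_le_sum fun i hi => by
        have hi := Finset.mem_range.1 hi
        exact (edist_le_ofReal hD).2 (hB _ (hS i hi.le) _ (hS (i + 1) hi))
    _ = ENNReal.ofReal (n * D) := by
        rw [Finset.sum_const, Finset.card_range, nsmul_eq_mul,
          ENNReal.ofReal_mul (Nat.cast_nonneg _), ENNReal.ofReal_natCast]
    _ ≤ ENNReal.ofReal (2 * N * D) := ENNReal.ofReal_le_ofReal
        (mul_le_mul_of_nonneg_right (by exact_mod_cast hn) hD)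

theorem IsIntrinsicIsometry.covDimLE [CompactSpace X] {f : X → Y} (hf : IsIntrinsicIsometry f)
    {d : ℕ} (hY : ∀ D > 0, ∃ 𝒱 : Fin (d + 1) → Set (Set Y), IsColoredOpenCover 𝒱 ∧
      ∀ k, ∀ V ∈ 𝒱 k, ∀ y ∈ V, ∀ y' ∈ V, dist y y' ≤ D) :
    CovDimLE X d := by
  refine covDimLE_of_forall_isColoredOpenCover fun δ hδ => ?_
  obtain ⟨ε, hε, happrox⟩ :=
    hf.exists_forall_edist_le_pullEps_add (ENNReal.ofReal_pos.2 (half_pos hδ))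
  obtain ⟨N, hN⟩ := ENat.ne_top_iff_exists.1
    (packingNumber_univ_ne_top (X := X) (ε := ε.toNNReal) (by simpa using hε))
  set D := δ / (4 * (N + 1))
  obtain ⟨𝒱, h𝒱, hmesh⟩ := hY D (by positivity)
  refine ⟨_, h𝒱.epsChainClasses hf.1 hε, ?_⟩
  rintro k _ ⟨B, hB, x, -, rfl⟩ u hu v hv
  have hpull := pullEps_le_of_mem_epsChainClass f hε hN.ge (hmesh k B hB)
    (mem_epsChainClass_trans (mem_epsChainClass_comm hu) hv)
  have hD : 2 * N * D < δ / 2 := by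
    rw [mul_div_assoc', div_lt_div_iff₀ (by positivity) two_pos]
    nlinarith
  have := (happrox u v).trans (add_le_add hpull le_rfl)
  rw [← ENNReal.ofReal_add (by positivity) (by positivity),
    edist_le_ofReal (by positivity)] at this
  linarith

end PullBack

end Metric

/-- a compact metric space admitting an intrinsic isometry into `ℝ^d` has
Lebesgue covering dimension at most `d`. -/
theorem covDim_le_of_intrinsicIsometry {X : Type*} [MetricSpace X] [CompactSpace X] (d : ℕ)
    (h : ∃ ι : X → EuclideanSpace ℝ (Fin d), IsIntrinsicIsometry ι) :
    CovDimLE X d := by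
  obtain ⟨ι, hι⟩ := h
  exact hι.covDimLE fun D hD => exists_isColoredOpenCover_euclideanSpace d hD
end

section
/- Let X = lim← Xₙ be the inverse limit of an inverse system of compact metric spaces with short bonding maps φ_{m,n}. Suppose for every ε > 0 there is N such that for all n ≥ N and all m ≥ n the image φ_{m,n}(X_m) is an ε-net in Xₙ. Then the projections ψₙ : X → Xₙ have images that are ε-nets for n large, and Xₙ converges to X in the Gromov–Hausdorff sense. -/
open Filter
open scoped ENNReal

/-- A sequence is compatible with the inverse system `φ`. -/
def InvCompat {X : ℕ → Type*} (φ : ∀ m n : ℕ, n ≤ m → X m → X n) (x : ∀ n, X n) : Prop :=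
  ∀ (m n : ℕ) (h : n ≤ m), φ m n h (x m) = x n

/-! Given `z ∈ Xₙ` that is `ε`-close to `φ_{m,n}(X_m)` for every `m`, lift the witnesses to
threads truncated at ever higher levels; a cluster point of these in the compact product `∏ Xₖ`
is a genuine thread whose `n`-th coordinate is `ε`-close to `z`. For the metric part, the maps
`(p, q) ↦ dist (ψₙ p) (ψₙ q)` are uniformly Lipschitz on the compact `L × L`, so by Arzelà–Ascoli
their pointwise convergence to `dist` is uniform: for large `n`, `ψₙ` is an `ε`-isometry onto
an `ε`-net, which bounds `ghDist (Xₙ) L`. -/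

open Topology

theorem exists_invCompat_mem_of_isClosed {X : ℕ → Type*} [∀ n, TopologicalSpace (X n)]
    [∀ n, CompactSpace (X n)] [∀ n, T2Space (X n)] [∀ n, Nonempty (X n)]
    (φ : ∀ m n : ℕ, n ≤ m → X m → X n) (hφ : ∀ m n h, Continuous (φ m n h))
    (hcomp : ∀ (k m n : ℕ) (hmk : m ≤ k) (hnm : n ≤ m) (x : X k),
      φ m n hnm (φ k m hmk x) = φ k n (hnm.trans hmk) x)
    {n : ℕ} {F : Set (X n)} (hF : IsClosed F) (hw : ∀ m (h : n ≤ m), ∃ w : X m, φ m n h w ∈ F) :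
    ∃ y, InvCompat φ y ∧ y n ∈ F := by
  choose w hwF using hw
  let s : ℕ → ∀ k, X k := fun m k =>
    if h : k ≤ m + n then φ (m + n) k h (w (m + n) le_add_self) else Classical.arbitrary _
  have hs : ∀ m k (h : k ≤ m + n), s m k = φ (m + n) k h (w (m + n) le_add_self) :=
    fun m k h => dif_pos h
  obtain ⟨y, hy⟩ := exists_clusterPt_of_compactSpace (map s atTop)
  refine ⟨y, fun j k hkj => ?_, ?_⟩
  · refine (isClosed_eq ((hφ j k hkj).comp (continuous_apply j)) (continuous_apply k)
      ).mem_of_mapClusterPt (s := {y | φ j k hkj (y j) = y k}) hy ?_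
    filter_upwards [eventually_ge_atTop j] with m hm
    have hj : j ≤ m + n := hm.trans le_self_add
    simp only [hs m j hj, hs m k (hkj.trans hj), hcomp]
  · refine (hF.preimage (continuous_apply n)).mem_of_mapClusterPt
      (s := (fun y => y n) ⁻¹' F) hy ?_
    filter_upwards with m
    simpa only [Set.mem_preimage, hs m n le_add_self] using hwF _ _

theorem tendstoUniformly_dist_comp_of_lipschitzWith {ι L : Type*} {Y : ι → Type*}
    [MetricSpace L] [CompactSpace L] [∀ i, PseudoMetricSpace (Y i)] {l : Filter ι}
    {f : ∀ i, L → Y i} {K : NNReal} (hf : ∀ i, LipschitzWith K (f i))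
    (h : ∀ p q, Tendsto (fun i => dist (f i p) (f i q)) l (𝓝 (dist p q))) :
    TendstoUniformly (fun i (pq : L × L) => dist (f i pq.1) (f i pq.2))
      (fun pq => dist pq.1 pq.2) l := by
  have hlip := fun i =>
    LipschitzWith.dist.comp (((hf i).comp LipschitzWith.prod_fst).prodMk
      ((hf i).comp LipschitzWith.prod_snd))
  have hequi : Equicontinuous fun i (pq : L × L) => dist (f i pq.1) (f i pq.2) :=
    (LipschitzWith.uniformEquicontinuous _ _ hlip).equicontinuous
  exact UniformFun.tendsto_iff_tendstoUniformly.1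
    ((hequi.tendsto_uniformFun_iff_pi l _).2 (tendsto_pi_nhds.2 fun pq => h pq.1 pq.2))

theorem ghDist_le_of_approx_map {L Y : Type*} [MetricSpace L] [CompactSpace L] [Nonempty L]
    [MetricSpace Y] [CompactSpace Y] [Nonempty Y] (f : L → Y) {ε δ : ℝ}
    (hnet : ∀ y, ∃ p, dist y (f p) ≤ ε) (hdist : ∀ p q, |dist p q - dist (f p) (f q)| ≤ δ) :
    GromovHausdorff.ghDist Y L ≤ δ / 2 + ε := by
  have h := GromovHausdorff.ghDist_le_of_approx_subsets (s := Set.univ) (fun p => f p) (ε₁ := 0)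
    (fun p => ⟨p, trivial, (dist_self p).le⟩)
    (fun y => let ⟨p, hp⟩ := hnet y; ⟨⟨p, trivial⟩, hp⟩) (fun p q => hdist p q)
  rw [GromovHausdorff.ghDist, dist_comm, ← GromovHausdorff.ghDist]
  simpa only [zero_add] using h

theorem tendsto_ghDist_zero_of_approx_maps {ι L : Type*} {Y : ι → Type*} [MetricSpace L]
    [CompactSpace L] [Nonempty L] [∀ i, MetricSpace (Y i)] [∀ i, CompactSpace (Y i)]
    [∀ i, Nonempty (Y i)] {l : Filter ι} (f : ∀ i, L → Y i)
    (hnet : ∀ ε > 0, ∀ᶠ i in l, ∀ y : Y i, ∃ p, dist y (f i p) ≤ ε)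
    (hdist : TendstoUniformly (fun i (pq : L × L) => dist (f i pq.1) (f i pq.2))
      (fun pq => dist pq.1 pq.2) l) :
    Tendsto (fun i => GromovHausdorff.ghDist (Y i) L) l (𝓝 0) := by
  refine tendsto_order.2 ⟨fun a ha => .of_forall fun i => ha.trans_le dist_nonneg, fun a ha => ?_⟩
  filter_upwards [hnet (a / 3) (by positivity), Metric.tendstoUniformly_iff.1 hdist (a / 3)
    (by positivity)] with i hnet_i hdist_i
  have := ghDist_le_of_approx_map (f i) hnet_i fun p q => by
    simpa only [Real.dist_eq] using (hdist_i (p, q)).le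
  linarith

theorem invLimit_ghLimit_general (X : ℕ → Type*) [∀ n, MetricSpace (X n)] [∀ n, CompactSpace (X n)]
    [∀ n, Nonempty (X n)] (φ : ∀ m n : ℕ, n ≤ m → X m → X n)
    (hshort : ∀ (m n : ℕ) (h : n ≤ m), LipschitzWith 1 (φ m n h))
    (hcomp : ∀ (k m n : ℕ) (hmk : m ≤ k) (hnm : n ≤ m) (x : X k),
      φ m n hnm (φ k m hmk x) = φ k n (hnm.trans hmk) x)
    -- the inverse limit, described abstractly:
    (L : Type*) [MetricSpace L] [CompactSpace L] [Nonempty L]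
    (ψ : ∀ n, L → X n) (hψshort : ∀ n, LipschitzWith 1 (ψ n))
    (hψdist : ∀ p q : L, Tendsto (fun n => dist (ψ n p) (ψ n q)) atTop (nhds (dist p q)))
    (hψsurj : ∀ y : ∀ n, X n, InvCompat φ y → ∃ p : L, ∀ n, ψ n p = y n)
    -- hypothesis: images of bonding maps are eventually ε-nets
    (hnet : ∀ ε > (0 : ℝ), ∃ N : ℕ, ∀ n ≥ N, ∀ (m : ℕ) (h : n ≤ m), ∀ z : X n,
      ∃ w : X m, dist z (φ m n h w) ≤ ε) :
    (∀ ε > (0 : ℝ), ∃ N : ℕ, ∀ n ≥ N, ∀ z : X n, ∃ p : L, dist z (ψ n p) ≤ ε) ∧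
    Tendsto (fun n => GromovHausdorff.ghDist (X n) L) atTop (nhds 0) := by
  have hψnet : ∀ ε > (0 : ℝ), ∀ᶠ n in atTop, ∀ z : X n, ∃ p : L, dist z (ψ n p) ≤ ε := by
    intro ε hε
    obtain ⟨N, hN⟩ := hnet ε hε
    filter_upwards [eventually_ge_atTop N] with n hn z
    obtain ⟨y, hy, hyz⟩ := exists_invCompat_mem_of_isClosed φ
      (fun m n h => (hshort m n h).continuous) hcomp Metric.isClosed_closedBall
      fun m h => (hN n hn m h z).imp fun _ => Metric.mem_closedBall'.2
    obtain ⟨p, hp⟩ := hψsurj y hy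
    exact ⟨p, hp n ▸ Metric.mem_closedBall'.1 hyz⟩
  exact ⟨fun ε hε => eventually_atTop.1 (hψnet ε hε),
    tendsto_ghDist_zero_of_approx_maps ψ hψnet
      (tendstoUniformly_dist_comp_of_lipschitzWith hψshort hψdist)⟩

/-- if the images of the bonding maps of an inverse system are eventually
`ε`-nets, then the images of the projections `ψₙ : X → Xₙ` of the inverse limit `X` are
eventually `ε`-nets, and `Xₙ → X` in the Gromov–Hausdorff sense. -/
theorem invLimit_ghLimit (X : ℕ → Type*) [∀ n, MetricSpace (X n)] [∀ n, CompactSpace (X n)]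
    [∀ n, Nonempty (X n)] (φ : ∀ m n : ℕ, n ≤ m → X m → X n)
    (hshort : ∀ (m n : ℕ) (h : n ≤ m), LipschitzWith 1 (φ m n h))
    (hcomp : ∀ (k m n : ℕ) (hmk : m ≤ k) (hnm : n ≤ m) (x : X k),
      φ m n hnm (φ k m hmk x) = φ k n (hnm.trans hmk) x)
    (hid : ∀ (n : ℕ) (x : X n), φ n n le_rfl x = x)
    -- the inverse limit, described abstractly:
    (L : Type*) [MetricSpace L] [CompactSpace L] [Nonempty L]
    (ψ : ∀ n, L → X n) (hψshort : ∀ n, LipschitzWith 1 (ψ n))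
    (hψcomp : ∀ (m n : ℕ) (h : n ≤ m) (p : L), φ m n h (ψ m p) = ψ n p)
    (hψdist : ∀ p q : L, Tendsto (fun n => dist (ψ n p) (ψ n q)) atTop (nhds (dist p q)))
    (hψsep : ∀ p q : L, (∀ n, ψ n p = ψ n q) → p = q)
    (hψsurj : ∀ y : ∀ n, X n, InvCompat φ y → ∃ p : L, ∀ n, ψ n p = y n)
    -- hypothesis: images of bonding maps are eventually ε-nets
    (hnet : ∀ ε > (0 : ℝ), ∃ N : ℕ, ∀ n ≥ N, ∀ (m : ℕ) (h : n ≤ m), ∀ z : X n,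
      ∃ w : X m, dist z (φ m n h w) ≤ ε) :
    (∀ ε > (0 : ℝ), ∃ N : ℕ, ∀ n ≥ N, ∀ z : X n, ∃ p : L, dist z (ψ n p) ≤ ε) ∧
    Tendsto (fun n => GromovHausdorff.ghDist (X n) L) atTop (nhds 0) :=
  invLimit_ghLimit_general X φ hshort hcomp L ψ hψshort hψdist hψsurj hnet
end

section
/- For every ε > 0 and any two real intervals I and J, there exists a continuous surjection h : I → J that is ε-crooked: for all t₁ < t₂ in I there exist t₁ < t₂' < t₁' < t₂ with |h(tᵢ') − h(tᵢ)| ≤ ε for i = 1, 2. -/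
/-!
Call `f` weakly `ε`-crooked on `[a, b]` if every pair `t₁ ≤ t₂` admits `t₁ ≤ s₂ ≤ s₁ ≤ t₂`
with `f sᵢ` within `ε` of `f tᵢ`; a map whose range has length at most `ε` is trivially so.
A weakly crooked map from `c` to `d` is built by induction on the length of `[c, d]`: split
`[a, b]` in three and run `c ↗ d - ε/2 ↘ c + ε/2 ↗ d`, each leg being a weakly crooked map onto
an interval shorter by `ε/2`. Pairs inside a leg are handled by the leg; pairs across a turning
point or across the whole middle leg by the intermediate value theorem, since the middle leg
sweeps back over everything between `c + ε/2` and `d - ε/2`. Finally, moving the points slightly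
by continuity turns weak `ε/3`-crookedness into the strict `ε`-crookedness of the theorem.
-/

open Set

def IsWeaklyCrookedPair (f : ℝ → ℝ) (ε t₁ t₂ : ℝ) : Prop :=
  ∃ s₂ ∈ Icc t₁ t₂, ∃ s₁ ∈ Icc s₂ t₂, |f s₁ - f t₁| ≤ ε ∧ |f s₂ - f t₂| ≤ ε

def WeaklyCrookedOn (f : ℝ → ℝ) (s : Set ℝ) (ε : ℝ) : Prop :=
  ∀ t₁ ∈ s, ∀ t₂ ∈ s, t₁ ≤ t₂ → IsWeaklyCrookedPair f ε t₁ t₂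

theorem IsWeaklyCrookedPair.const_sub {f : ℝ → ℝ} {ε t₁ t₂ : ℝ}
    (h : IsWeaklyCrookedPair f ε t₁ t₂) (C : ℝ) :
    IsWeaklyCrookedPair (fun t => C - f t) ε t₁ t₂ := by
  obtain ⟨s₂, hs₂, s₁, hs₁, h₁, h₂⟩ := h
  exact ⟨s₂, hs₂, s₁, hs₁, by rwa [sub_sub_sub_cancel_left, abs_sub_comm],
    by rwa [sub_sub_sub_cancel_left, abs_sub_comm]⟩

theorem WeaklyCrookedOn.const_sub {f : ℝ → ℝ} {s : Set ℝ} {ε : ℝ}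
    (h : WeaklyCrookedOn f s ε) (C : ℝ) : WeaklyCrookedOn (fun t => C - f t) s ε :=
  fun t₁ h₁ t₂ h₂ h₁₂ => (h t₁ h₁ t₂ h₂ h₁₂).const_sub C

theorem WeaklyCrookedOn.congr {f g : ℝ → ℝ} {s : Set ℝ} {ε : ℝ} (hs : s.OrdConnected)
    (h : WeaklyCrookedOn f s ε) (hfg : EqOn f g s) : WeaklyCrookedOn g s ε := by
  intro t₁ h₁ t₂ h₂ h₁₂
  obtain ⟨s₂, hs₂, s₁, hs₁, e₁, e₂⟩ := h t₁ h₁ t₂ h₂ h₁₂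
  have hs₂s : s₂ ∈ s := hs.out h₁ h₂ hs₂
  have hs₁s : s₁ ∈ s := hs.out h₁ h₂ ⟨hs₂.1.trans hs₁.1, hs₁.2⟩
  exact ⟨s₂, hs₂, s₁, hs₁, by rwa [← hfg hs₁s, ← hfg h₁], by rwa [← hfg hs₂s, ← hfg h₂]⟩

theorem weaklyCrookedOn_of_mapsTo {f : ℝ → ℝ} {s : Set ℝ} {c d ε : ℝ}
    (hf : MapsTo f s (uIcc c d)) (hε : |d - c| ≤ ε) : WeaklyCrookedOn f s ε := by
  intro t₁ h₁ t₂ h₂ h₁₂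
  have h : |f t₁ - f t₂| ≤ ε := by
    rw [abs_sub_comm]
    exact (abs_sub_le_of_uIcc_subset_uIcc (uIcc_subset_uIcc (hf h₁) (hf h₂))).trans hε
  exact ⟨t₁, ⟨le_rfl, h₁₂⟩, t₁, ⟨le_rfl, h₁₂⟩, by simpa using (abs_nonneg _).trans h, h⟩

theorem WeaklyCrookedOn.of_Icc_of_Icc {f : ℝ → ℝ} {a p q b ε : ℝ}
    (hl : WeaklyCrookedOn f (Icc a q) ε) (hr : WeaklyCrookedOn f (Icc p b) ε)
    (hpq : ∀ t₁ ∈ Icc a p, ∀ t₂ ∈ Icc q b, IsWeaklyCrookedPair f ε t₁ t₂) :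
    WeaklyCrookedOn f (Icc a b) ε := by
  intro t₁ h₁ t₂ h₂ h₁₂
  by_cases hq : t₂ ≤ q
  · exact hl t₁ ⟨h₁.1, h₁₂.trans hq⟩ t₂ ⟨h₁.1.trans h₁₂, hq⟩ h₁₂
  by_cases hp : p ≤ t₁
  · exact hr t₁ ⟨hp, h₁.2⟩ t₂ ⟨hp.trans h₁₂, h₂.2⟩ h₁₂
  exact hpq t₁ ⟨h₁.1, (not_le.1 hp).le⟩ t₂ ⟨(not_le.1 hq).le, h₂.2⟩

theorem exists_mem_Icc_abs_sub_le {f : ℝ → ℝ} {x y v ε : ℝ} (hxy : x ≤ y) (hε : 0 ≤ ε)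
    (hf : ContinuousOn f (Icc x y))
    (hv : v ∈ Icc (min (f x) (f y) - ε) (max (f x) (f y) + ε)) :
    ∃ s ∈ Icc x y, |f s - v| ≤ ε := by
  -- `w` is `v` clamped to `[[f x, f y]]`
  set w := max (min (f x) (f y)) (min v (max (f x) (f y)))
  have hw : w ∈ uIcc (f x) (f y) := ⟨le_max_left _ _, max_le inf_le_sup (min_le_right _ _)⟩
  rw [← uIcc_of_le hxy] at hf ⊢
  obtain ⟨s, hs, hsw⟩ := intermediate_value_uIcc hf hw
  refine ⟨s, hs, ?_⟩
  rw [hsw, abs_le]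
  grind

theorem isWeaklyCrookedPair_of_mem_Icc {f : ℝ → ℝ} {ε t₁ t₂ x₁ x₂ y₁ y₂ : ℝ} (hε : 0 ≤ ε)
    (hf : ContinuousOn f (Icc t₁ t₂)) (h₁ : t₁ ≤ x₁) (hx : x₁ ≤ x₂) (hxy : x₂ ≤ y₁)
    (hy : y₁ ≤ y₂) (h₂ : y₂ ≤ t₂)
    (hfx : f t₂ ∈ Icc (min (f x₁) (f x₂) - ε) (max (f x₁) (f x₂) + ε))
    (hfy : f t₁ ∈ Icc (min (f y₁) (f y₂) - ε) (max (f y₁) (f y₂) + ε)) :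
    IsWeaklyCrookedPair f ε t₁ t₂ := by
  obtain ⟨s₂, hs₂, e₂⟩ :=
    exists_mem_Icc_abs_sub_le hx hε (hf.mono (Icc_subset_Icc h₁ (hxy.trans (hy.trans h₂)))) hfx
  obtain ⟨s₁, hs₁, e₁⟩ :=
    exists_mem_Icc_abs_sub_le hy hε (hf.mono (Icc_subset_Icc (h₁.trans (hx.trans hxy)) h₂)) hfy
  exact ⟨s₂, ⟨h₁.trans hs₂.1, hs₂.2.trans (hxy.trans (hy.trans h₂))⟩,
    s₁, ⟨hs₂.2.trans (hxy.trans hs₁.1), hs₁.2.trans h₂⟩, e₁, e₂⟩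

theorem WeaklyCrookedOn.union_of_isMaxOn {f : ℝ → ℝ} {l m r ε : ℝ} (hε : 0 ≤ ε)
    (hl : WeaklyCrookedOn f (Icc l m) ε) (hr : WeaklyCrookedOn f (Icc m r) ε)
    (hf : ContinuousOn f (Icc l r)) (hm : IsMaxOn f (Icc l r) m) :
    WeaklyCrookedOn f (Icc l r) ε := by
  refine hl.of_Icc_of_Icc hr fun t₁ h₁ t₂ h₂ => ?_
  have hlr : Icc t₁ t₂ ⊆ Icc l r := Icc_subset_Icc h₁.1 h₂.2
  have hft₁ : f t₁ ≤ f m := hm (hlr ⟨le_rfl, h₁.2.trans h₂.1⟩)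
  have hft₂ : f t₂ ≤ f m := hm (hlr ⟨h₁.2.trans h₂.1, le_rfl⟩)
  rcases le_total (f t₁) (f t₂) with h | h
  · obtain ⟨u, hu, v, hv, ev, eu⟩ := hl t₁ h₁ m ⟨h₁.1.trans h₁.2, le_rfl⟩ h₁.2
    rw [abs_le] at ev eu
    refine isWeaklyCrookedPair_of_mem_Icc hε (hf.mono hlr) le_rfl hu.1 hv.1 le_rfl
      (hv.2.trans h₂.1) ⟨?_, ?_⟩ ⟨?_, ?_⟩ <;> grind
  · obtain ⟨u, hu, v, hv, ev, eu⟩ := hr m ⟨le_rfl, h₂.1.trans h₂.2⟩ t₂ h₂ h₂.1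
    rw [abs_le] at ev eu
    refine isWeaklyCrookedPair_of_mem_Icc hε (hf.mono hlr) (h₁.2.trans hu.1) le_rfl hv.1 hv.2
      le_rfl ⟨?_, ?_⟩ ⟨?_, ?_⟩ <;> grind

theorem WeaklyCrookedOn.union_of_isMinOn {f : ℝ → ℝ} {l m r ε : ℝ} (hε : 0 ≤ ε)
    (hl : WeaklyCrookedOn f (Icc l m) ε) (hr : WeaklyCrookedOn f (Icc m r) ε)
    (hf : ContinuousOn f (Icc l r)) (hm : IsMinOn f (Icc l r) m) :
    WeaklyCrookedOn f (Icc l r) ε := by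
  simpa using ((hl.const_sub 0).union_of_isMaxOn hε (hr.const_sub 0)
    (continuousOn_const.sub hf) (by simpa using hm.neg)).const_sub 0

noncomputable def glueAt (m : ℝ) (f g : ℝ → ℝ) (t : ℝ) : ℝ := if t ≤ m then f t else g t

section glueAt

variable {m t : ℝ} {f g : ℝ → ℝ}

theorem glueAt_of_le (h : t ≤ m) : glueAt m f g t = f t := if_pos h

theorem glueAt_of_ge (hfg : f m = g m) (h : m ≤ t) : glueAt m f g t = g t := by
  rcases h.eq_or_lt with rfl | h
  · exact (if_pos le_rfl).trans hfg
  · exact if_neg h.not_ge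

theorem Continuous.glueAt (hf : Continuous f) (hg : Continuous g) (hfg : f m = g m) :
    Continuous (glueAt m f g) :=
  hf.if_le hg continuous_id continuous_const fun _ hx => hx ▸ hfg

end glueAt

structure IsCrookedPath (f : ℝ → ℝ) (a b c d ε : ℝ) : Prop where
  continuous : Continuous f
  apply_left : f a = c
  apply_right : f b = d
  mapsTo : MapsTo f (Icc a b) (uIcc c d)
  weaklyCrookedOn : WeaklyCrookedOn f (Icc a b) ε

theorem isCrookedPath_lineMap {a b c d ε : ℝ} (hab : a < b) (hε : |d - c| ≤ ε) :
    IsCrookedPath (fun t => AffineMap.lineMap c d ((t - a) / (b - a))) a b c d ε := by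
  have hba : 0 < b - a := sub_pos.2 hab
  have hmaps : MapsTo (fun t => AffineMap.lineMap c d ((t - a) / (b - a))) (Icc a b) (uIcc c d) :=
    fun t ht => segment_eq_uIcc c d ▸ lineMap_mem_segment ℝ c d
      ⟨div_nonneg (sub_nonneg.2 ht.1) hba.le, (div_le_one hba).2 (by linarith [ht.2])⟩
  exact ⟨by fun_prop, by simp, by simp [hba.ne'], hmaps, weaklyCrookedOn_of_mapsTo hmaps hε⟩

theorem IsCrookedPath.const_sub {f : ℝ → ℝ} {a b c d ε : ℝ} (h : IsCrookedPath f a b c d ε) :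
    IsCrookedPath (fun t => c + d - f t) a b d c ε := by
  refine ⟨continuous_const.sub h.continuous, by simp [h.apply_left], by simp [h.apply_right],
    fun t ht => ?_, h.weaklyCrookedOn.const_sub _⟩
  have := mem_image_of_mem (fun x => c + d - x) (h.mapsTo ht)
  rwa [image_const_sub_uIcc, add_sub_cancel_left, add_sub_cancel_right] at this

-- The zigzag `c ↗ d - δ ↘ c + δ ↗ d`: the turning points are extrema of the neighbouring
-- pieces, and a pair straddling the middle piece is served by the crooked pair `(p, q)` of
-- that piece, which sweeps from `d - δ` down to `c + δ`.
theorem WeaklyCrookedOn.of_zigzag {f : ℝ → ℝ} {a p q b c d δ ε : ℝ} (hap : a ≤ p) (hpq : p ≤ q)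
    (hqb : q ≤ b) (hδ : 0 ≤ δ) (hδε : δ ≤ ε) (hf : ContinuousOn f (Icc a b))
    (w₁ : WeaklyCrookedOn f (Icc a p) ε) (w₂ : WeaklyCrookedOn f (Icc p q) ε)
    (w₃ : WeaklyCrookedOn f (Icc q b) ε) (m₁ : MapsTo f (Icc a p) (Icc c (d - δ)))
    (m₂ : MapsTo f (Icc p q) (Icc (c + δ) (d - δ))) (m₃ : MapsTo f (Icc q b) (Icc (c + δ) d))
    (hfp : f p = d - δ) (hfq : f q = c + δ) : WeaklyCrookedOn f (Icc a b) ε := by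
  have hε : 0 ≤ ε := hδ.trans hδε
  refine (w₁.union_of_isMaxOn hε w₂ (hf.mono (Icc_subset_Icc le_rfl hqb)) fun t ht => ?_)
    |>.of_Icc_of_Icc (w₂.union_of_isMinOn hε w₃ (hf.mono (Icc_subset_Icc hap le_rfl))
      fun t ht => ?_) fun t₁ ht₁ t₂ ht₂ => ?_
  · show f t ≤ f p
    rcases le_total t p with htp | htp
    · exact hfp ▸ (m₁ ⟨ht.1, htp⟩).2
    · exact hfp ▸ (m₂ ⟨htp, ht.2⟩).2
  · show f q ≤ f t
    rcases le_total t q with htq | htq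
    · exact hfq ▸ (m₂ ⟨ht.1, htq⟩).1
    · exact hfq ▸ (m₃ ⟨htq, ht.2⟩).1
  obtain ⟨u, hu, v, hv, ev, eu⟩ := w₂ p ⟨le_rfl, hpq⟩ q ⟨hpq, le_rfl⟩ hpq
  rw [abs_le] at ev eu
  have := m₁ ht₁
  have := m₃ ht₂
  refine isWeaklyCrookedPair_of_mem_Icc hε (hf.mono (Icc_subset_Icc ht₁.1 ht₂.2)) ht₁.2 hu.1
    hv.1 hv.2 ht₂.1 ⟨?_, ?_⟩ ⟨?_, ?_⟩ <;> grind

theorem IsCrookedPath.glueAt₃ {f₁ f₂ f₃ : ℝ → ℝ} {a p q b c d δ ε : ℝ} (hap : a ≤ p)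
    (hpq : p ≤ q) (hqb : q ≤ b) (hδ : 0 ≤ δ) (hδε : δ ≤ ε) (hcd : c + δ ≤ d - δ)
    (h₁ : IsCrookedPath f₁ a p c (d - δ) ε) (h₂ : IsCrookedPath f₂ p q (d - δ) (c + δ) ε)
    (h₃ : IsCrookedPath f₃ q b (c + δ) d ε) :
    IsCrookedPath (glueAt p f₁ (glueAt q f₂ f₃)) a b c d ε := by
  set f := glueAt p f₁ (glueAt q f₂ f₃)
  have h₂₃ : f₂ q = f₃ q := h₂.apply_right.trans h₃.apply_left.symm
  have h₁₂ : f₁ p = glueAt q f₂ f₃ p := by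
    rw [glueAt_of_le hpq, h₁.apply_right, h₂.apply_left]
  have e₁ : EqOn f f₁ (Icc a p) := fun t ht => glueAt_of_le ht.2
  have e₂ : EqOn f f₂ (Icc p q) := fun t ht => (glueAt_of_ge h₁₂ ht.1).trans (glueAt_of_le ht.2)
  have e₃ : EqOn f f₃ (Icc q b) := fun t ht =>
    (glueAt_of_ge h₁₂ (hpq.trans ht.1)).trans (glueAt_of_ge h₂₃ ht.1)
  have hf : Continuous f := h₁.continuous.glueAt (h₂.continuous.glueAt h₃.continuous h₂₃) h₁₂
  have m₁ : MapsTo f (Icc a p) (Icc c (d - δ)) := by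
    simpa [uIcc_of_le (by linarith : c ≤ d - δ)] using h₁.mapsTo.congr e₁.symm
  have m₂ : MapsTo f (Icc p q) (Icc (c + δ) (d - δ)) := by
    simpa [uIcc_of_ge hcd] using h₂.mapsTo.congr e₂.symm
  have m₃ : MapsTo f (Icc q b) (Icc (c + δ) d) := by
    simpa [uIcc_of_le (by linarith : c + δ ≤ d)] using h₃.mapsTo.congr e₃.symm
  refine ⟨hf, (e₁ ⟨le_rfl, hap⟩).trans h₁.apply_left, (e₃ ⟨hqb, le_rfl⟩).trans h₃.apply_right,
    fun t ht => ?_, WeaklyCrookedOn.of_zigzag hap hpq hqb hδ hδε hf.continuousOn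
      (h₁.weaklyCrookedOn.congr ordConnected_Icc e₁.symm)
      (h₂.weaklyCrookedOn.congr ordConnected_Icc e₂.symm)
      (h₃.weaklyCrookedOn.congr ordConnected_Icc e₃.symm) m₁ m₂ m₃
      ((e₂ ⟨le_rfl, hpq⟩).trans h₂.apply_left) ((e₂ ⟨hpq, le_rfl⟩).trans h₂.apply_right)⟩
  rw [uIcc_of_le (by linarith)]
  rcases le_total t p with htp | htp
  · exact Icc_subset_Icc le_rfl (by linarith) (m₁ ⟨ht.1, htp⟩)
  rcases le_total t q with htq | htq
  · exact Icc_subset_Icc (by linarith) (by linarith) (m₂ ⟨htp, htq⟩)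
  · exact Icc_subset_Icc (by linarith) le_rfl (m₃ ⟨htq, ht.2⟩)

theorem IsCrookedPath.image_Icc {f : ℝ → ℝ} {a b c d ε : ℝ} (h : IsCrookedPath f a b c d ε)
    (hab : a ≤ b) : f '' Icc a b = uIcc c d := by
  refine h.mapsTo.image_subset.antisymm ?_
  have := intermediate_value_uIcc (a := a) (b := b) h.continuous.continuousOn
  rwa [uIcc_of_le hab, h.apply_left, h.apply_right] at this

theorem exists_isCrookedPath_of_le {ε : ℝ} (hε : 0 ≤ ε) (n : ℕ) {a b c d : ℝ} (hab : a < b)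
    (hcd : c ≤ d) (hn : d - c ≤ ε + n * (ε / 2)) : ∃ f, IsCrookedPath f a b c d ε := by
  induction n generalizing a b c d with
  | zero =>
    exact ⟨_, isCrookedPath_lineMap hab (by rw [abs_of_nonneg (sub_nonneg.2 hcd)]; simpa using hn)⟩
  | succ n ih =>
    rcases le_or_gt (d - c) ε with hdc | hdc
    · exact ⟨_, isCrookedPath_lineMap hab (by rwa [abs_of_nonneg (sub_nonneg.2 hcd)])⟩
    push_cast at hn
    obtain ⟨f₁, h₁⟩ := ih (a := a) (b := (2 * a + b) / 3) (c := c) (d := d - ε / 2)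
      (by linarith) (by linarith) (by linarith)
    obtain ⟨f₂, h₂⟩ := ih (a := (2 * a + b) / 3) (b := (a + 2 * b) / 3) (c := c + ε / 2)
      (d := d - ε / 2) (by linarith) (by linarith) (by linarith)
    obtain ⟨f₃, h₃⟩ := ih (a := (a + 2 * b) / 3) (b := b) (c := c + ε / 2) (d := d)
      (by linarith) (by linarith) (by linarith)
    exact ⟨_, h₁.glueAt₃ (by linarith) (by linarith) (by linarith) (by linarith) (by linarith)
      (by linarith) h₂.const_sub h₃⟩

theorem exists_isCrookedPath {ε : ℝ} (hε : 0 < ε) {a b c d : ℝ} (hab : a < b) (hcd : c ≤ d) :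
    ∃ f, IsCrookedPath f a b c d ε := by
  obtain ⟨n, hn⟩ := exists_nat_ge ((d - c) / (ε / 2))
  refine exists_isCrookedPath_of_le hε.le n hab hcd ?_
  rw [div_le_iff₀ (by positivity)] at hn
  linarith

theorem exists_mem_Ioo_abs_sub_le_of_left {f : ℝ → ℝ} {x y ε : ℝ} (hxy : x < y)
    (hf : ContinuousWithinAt f (Ioo x y) x) (hε : 0 < ε) : ∃ z ∈ Ioo x y, |f z - f x| ≤ ε := by
  have := left_nhdsWithin_Ioo_neBot hxy
  obtain ⟨z, hzx, hz⟩ :=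
    ((hf.eventually (Metric.closedBall_mem_nhds _ hε)).and self_mem_nhdsWithin).exists
  exact ⟨z, hz, hzx⟩

theorem exists_mem_Ioo_abs_sub_le_of_right {f : ℝ → ℝ} {x y ε : ℝ} (hxy : x < y)
    (hf : ContinuousWithinAt f (Ioo x y) y) (hε : 0 < ε) : ∃ z ∈ Ioo x y, |f z - f y| ≤ ε := by
  have := right_nhdsWithin_Ioo_neBot hxy
  obtain ⟨z, hzx, hz⟩ :=
    ((hf.eventually (Metric.closedBall_mem_nhds _ hε)).and self_mem_nhdsWithin).exists
  exact ⟨z, hz, hzx⟩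

theorem WeaklyCrookedOn.exists_strict {f : ℝ → ℝ} {a b ε : ℝ} (h : WeaklyCrookedOn f (Icc a b) ε)
    (hf : ContinuousOn f (Icc a b)) (hε : 0 < ε) {t₁ t₂ : ℝ} (h₁ : t₁ ∈ Icc a b)
    (h₂ : t₂ ∈ Icc a b) (h₁₂ : t₁ < t₂) :
    ∃ t₂' t₁', t₁ < t₂' ∧ t₂' < t₁' ∧ t₁' < t₂ ∧
      |f t₁' - f t₁| ≤ 3 * ε ∧ |f t₂' - f t₂| ≤ 3 * ε := by
  -- Apply weak crookedness to `u₁ < u₂` just inside `(t₁, t₂)`, then pull the resulting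
  -- `s₂ ≤ s₁` slightly apart; each of the three moves costs at most `ε`.
  have hI : Icc t₁ t₂ ⊆ Icc a b := Icc_subset_Icc h₁.1 h₂.2
  have hc {x y z : ℝ} (hx : t₁ ≤ x) (hy : y ≤ t₂) (hz : z ∈ Icc x y) :
      ContinuousWithinAt f (Ioo x y) z :=
    (hf _ (hI (Icc_subset_Icc hx hy hz))).mono
      (Ioo_subset_Icc_self.trans ((Icc_subset_Icc hx hy).trans hI))
  obtain ⟨u₁, hu₁, e₁⟩ := exists_mem_Ioo_abs_sub_le_of_left h₁₂
    (hc le_rfl le_rfl (left_mem_Icc.2 h₁₂.le)) hε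
  obtain ⟨u₂, hu₂, e₂⟩ := exists_mem_Ioo_abs_sub_le_of_right hu₁.2
    (hc hu₁.1.le le_rfl (right_mem_Icc.2 hu₁.2.le)) hε
  obtain ⟨s₂, hs₂, s₁, hs₁, e₁', e₂'⟩ :=
    h u₁ (hI ⟨hu₁.1.le, hu₁.2.le⟩) u₂ (hI ⟨hu₁.1.le.trans hu₂.1.le, hu₂.2.le⟩) hu₂.1.le
  obtain ⟨t₂', ht₂', e₂''⟩ := exists_mem_Ioo_abs_sub_le_of_right (hu₁.1.trans_le hs₂.1)
    (hc le_rfl (hs₂.2.trans hu₂.2.le) (right_mem_Icc.2 (hu₁.1.trans_le hs₂.1).le)) hε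
  obtain ⟨t₁', ht₁', e₁''⟩ := exists_mem_Ioo_abs_sub_le_of_left (hs₁.2.trans_lt hu₂.2)
    (hc (hu₁.1.le.trans (hs₂.1.trans hs₁.1)) le_rfl
      (left_mem_Icc.2 (hs₁.2.trans_lt hu₂.2).le)) hε
  refine ⟨t₂', t₁', ht₂'.1, ht₂'.2.trans_le (hs₁.1.trans ht₁'.1.le), ht₁'.2, ?_, ?_⟩
  · exact (abs_sub_le _ (f s₁) _).trans (by linarith [abs_sub_le (f s₁) (f u₁) (f t₁)])
  · exact (abs_sub_le _ (f s₂) _).trans (by linarith [abs_sub_le (f s₂) (f u₂) (f t₂)])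

/-- for every `ε > 0` and nondegenerate compact intervals `I = [a,b]`,
`J = [c,d]`, there is a continuous surjection `h : I → J` which is `ε`-crooked. -/
theorem exists_crooked_surjection (ε : ℝ) (hε : 0 < ε) (a b c d : ℝ) (hab : a < b)
    (hcd : c < d) :
    ∃ h : ℝ → ℝ, ContinuousOn h (Set.Icc a b) ∧ h '' Set.Icc a b = Set.Icc c d ∧
      ∀ t₁ t₂ : ℝ, t₁ ∈ Set.Icc a b → t₂ ∈ Set.Icc a b → t₁ < t₂ →
        ∃ t₂' t₁' : ℝ, t₁ < t₂' ∧ t₂' < t₁' ∧ t₁' < t₂ ∧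
          |h t₁' - h t₁| ≤ ε ∧ |h t₂' - h t₂| ≤ ε := by
  obtain ⟨h, hh⟩ := exists_isCrookedPath (by positivity : 0 < ε / 3) hab hcd.le
  refine ⟨h, hh.continuous.continuousOn, by rw [hh.image_Icc hab.le, uIcc_of_le hcd.le],
    fun t₁ t₂ h₁ h₂ h₁₂ => ?_⟩
  simpa [mul_div_cancel₀] using
    hh.weaklyCrookedOn.exists_strict hh.continuous.continuousOn (by positivity) h₁ h₂ h₁₂
end

section
/- Let γ : [0, L] → X be a curve parametrized by arclength in a metric space X. Then for almost every t₀ ∈ [0, L], |γ(t₀) γ(t₀ + ε)| = ε + o(ε) as ε → 0+, i.e., lim_{ε→0+} |γ(t₀) γ(t₀+ε)|/ε = 1 for almost all t₀. -/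
/-!
Let `xᵢ` run through a countable dense subset of the image of the curve `γ`. The functions
`fᵢ = dist (xᵢ) (γ ·)` are 1-Lipschitz, hence absolutely continuous with `|fᵢ'| ≤ 1` a.e., and
`d(γ a, γ b) = supᵢ |fᵢ b - fᵢ a| ≤ ∫ₐᵇ supᵢ |fᵢ'|`. Summing over partitions bounds the length
`b - a` by the integral of `m = supᵢ |fᵢ'| ≤ 1`, so `m = 1` a.e. At a point where `m = 1` and all
`fᵢ` are differentiable, each `i` gives `liminf d(γ t, γ (t + ε)) / ε ≥ |fᵢ'(t)|`, while the
quotient is at most `1` because `γ` is 1-Lipschitz.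
-/

open Filter MeasureTheory Set Topology
open scoped ENNReal NNReal

theorem eVariationOn_Icc_le_measure_Ioc {E : Type*} [PseudoEMetricSpace E] (f : ℝ → E)
    (μ : Measure ℝ) {a b : ℝ}
    (h : ∀ s ∈ Icc a b, ∀ t ∈ Icc a b, s ≤ t → edist (f s) (f t) ≤ μ (Ioc s t)) :
    eVariationOn f (Icc a b) ≤ μ (Ioc a b) := by
  refine iSup_le fun ⟨N, u, hu, hus⟩ => ?_
  have partial_sums : ∀ m, ∑ i ∈ Finset.range m, edist (f (u (i + 1))) (f (u i)) ≤
      μ (Ioc (u 0) (u m)) := by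
    intro m
    induction m with
    | zero => simp
    | succ m ih =>
      rw [Finset.sum_range_succ, ← Ioc_union_Ioc_eq_Ioc (hu m.zero_le) (hu m.le_succ),
        measure_union (Ioc_disjoint_Ioc_of_le le_rfl) measurableSet_Ioc, edist_comm]
      exact add_le_add ih (h _ (hus m) _ (hus (m + 1)) (hu m.le_succ))
  exact (partial_sums N).trans (measure_mono (Ioc_subset_Ioc (hus 0).1 (hus N).2))

theorem AbsolutelyContinuousOnInterval.edist_le_lintegral_enorm_deriv {f : ℝ → ℝ} {a b : ℝ}
    (hf : AbsolutelyContinuousOnInterval f a b) (hab : a ≤ b) :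
    edist (f a) (f b) ≤ ∫⁻ t in Ioc a b, ‖deriv f t‖ₑ := by
  rw [edist_comm, edist_dist, Real.dist_eq, ← hf.integral_deriv_eq_sub,
    intervalIntegral.integral_of_le hab, ← Real.enorm_eq_ofReal_abs]
  exact enorm_integral_le_lintegral_enorm _

theorem HasDerivAt.tendsto_abs_sub_div_nhdsGT {f : ℝ → ℝ} {f' t : ℝ} (hf : HasDerivAt f f' t) :
    Tendsto (fun ε => |f (t + ε) - f t| / ε) (𝓝[>] 0) (𝓝 |f'|) := by
  refine ((hasDerivAt_iff_tendsto_slope_zero.1 hf).mono_left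
    (nhdsWithin_mono _ fun ε (hε : 0 < ε) => hε.ne')).abs.congr' ?_
  filter_upwards [self_mem_nhdsWithin] with ε (hε : 0 < ε)
  rw [smul_eq_mul, abs_mul, abs_inv, abs_of_pos hε, inv_mul_eq_div]

theorem HasConstantSpeedOnWith.lipschitzOnWith {E : Type*} [PseudoEMetricSpace E] {f : ℝ → E}
    {s : Set ℝ} {l : ℝ≥0} (h : HasConstantSpeedOnWith f s l) : LipschitzOnWith l f s := by
  have ordered : ∀ x ∈ s, ∀ y ∈ s, x ≤ y → edist (f x) (f y) ≤ l * edist x y := by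
    intro x hx y hy hxy
    calc edist (f x) (f y) ≤ eVariationOn f (s ∩ Icc x y) :=
          eVariationOn.edist_le f ⟨hx, le_rfl, hxy⟩ ⟨hy, hxy, le_rfl⟩
      _ = l * edist x y := by
          rw [h hx hy, ENNReal.ofReal_mul l.coe_nonneg, ENNReal.ofReal_coe_nnreal, edist_dist,
            Real.dist_eq, abs_sub_comm, abs_of_nonneg (sub_nonneg.2 hxy)]
  intro x hx y hy
  rcases le_total x y with hxy | hyx
  · exact ordered x hx y hy hxy
  · rw [edist_comm, edist_comm x]
    exact ordered y hy x hx hyx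

theorem edist_le_iSup_edist_dist {X ι : Type*} [PseudoMetricSpace X] {x : ι → X} {y : X}
    (hy : y ∈ closure (range x)) (z : X) :
    edist y z ≤ ⨆ i, edist (dist (x i) y) (dist (x i) z) := by
  have hclosed : IsClosed {w : X | edist (dist w y) (dist w z) ≤
      ⨆ i, edist (dist (x i) y) (dist (x i) z)} :=
    isClosed_le (by fun_prop) continuous_const
  have := hclosed.closure_subset_iff.2 (range_subset_iff.2 fun i =>
    le_iSup (fun i => edist (dist (x i) y) (dist (x i) z)) i) hy
  simpa [edist_dist] using this

section SupDistDeriv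

variable {X ι : Type*} [PseudoMetricSpace X] {g : ℝ → X} {x : ι → X} {a b t : ℝ}

noncomputable def supDistDeriv (g : ℝ → X) (x : ι → X) (t : ℝ) : ℝ≥0∞ :=
  ⨆ i, ‖deriv (fun s => dist (x i) (g s)) t‖ₑ

theorem measurable_supDistDeriv [Countable ι] : Measurable (supDistDeriv g x) :=
  Measurable.iSup fun _ => (measurable_deriv _).enorm

theorem supDistDeriv_le {K : ℝ≥0} (hg : LipschitzWith K g) (t : ℝ) : supDistDeriv g x t ≤ K :=
  iSup_le fun i => by
    simpa [← ofReal_norm, ENNReal.ofReal_le_iff_le_toReal, Function.comp_def] using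
      norm_deriv_le_of_lipschitz (x₀ := t) ((LipschitzWith.dist_right (x i)).comp hg)

theorem edist_le_lintegral_supDistDeriv {K : ℝ≥0} (hg : LipschitzWith K g)
    (ha : g a ∈ closure (range x)) (hab : a ≤ b) :
    edist (g a) (g b) ≤ ∫⁻ t in Ioc a b, supDistDeriv g x t :=
  calc edist (g a) (g b) ≤ ⨆ i, edist (dist (x i) (g a)) (dist (x i) (g b)) :=
        edist_le_iSup_edist_dist ha _
    _ ≤ ⨆ i, ∫⁻ t in Ioc a b, ‖deriv (fun s => dist (x i) (g s)) t‖ₑ := by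
        gcongr with i
        have hlip := ((LipschitzWith.dist_right (x i)).comp hg).lipschitzOnWith (s := uIcc a b)
        exact hlip.absolutelyContinuousOnInterval.edist_le_lintegral_enorm_deriv hab
    _ ≤ ∫⁻ t in Ioc a b, supDistDeriv g x t :=
        iSup_le fun i => lintegral_mono fun t =>
          le_iSup (fun j => ‖deriv (fun s => dist (x j) (g s)) t‖ₑ) i

theorem eVariationOn_le_lintegral_supDistDeriv {K : ℝ≥0} (hg : LipschitzWith K g)
    (hx : range g ⊆ closure (range x)) :
    eVariationOn g (Icc a b) ≤ ∫⁻ t in Ioc a b, supDistDeriv g x t := by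
  rw [← withDensity_apply _ measurableSet_Ioc]
  refine eVariationOn_Icc_le_measure_Ioc g _ fun s _ t _ hst => ?_
  rw [withDensity_apply _ measurableSet_Ioc]
  exact edist_le_lintegral_supDistDeriv hg (hx (mem_range_self s)) hst

theorem ae_supDistDeriv_eq_one [Countable ι] (hg : LipschitzWith 1 g)
    (hx : range g ⊆ closure (range x)) (hvar : ENNReal.ofReal (b - a) ≤ eVariationOn g (Icc a b)) :
    ∀ᵐ t ∂volume.restrict (Icc a b), supDistDeriv g x t = 1 := by
  have hle : ∀ t, supDistDeriv g x t ≤ 1 := by simpa using supDistDeriv_le (x := x) hg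
  have hlint : ∫⁻ _ in Icc a b, 1 ≤ ∫⁻ t in Icc a b, supDistDeriv g x t :=
    calc ∫⁻ _ in Icc a b, 1 = ENNReal.ofReal (b - a) := by rw [setLIntegral_one, Real.volume_Icc]
      _ ≤ eVariationOn g (Icc a b) := hvar
      _ ≤ ∫⁻ t in Ioc a b, supDistDeriv g x t := eVariationOn_le_lintegral_supDistDeriv hg hx
      _ ≤ ∫⁻ t in Icc a b, supDistDeriv g x t := lintegral_mono_set Ioc_subset_Icc_self
  refine ae_eq_of_ae_le_of_lintegral_le (ae_of_all _ hle) (ne_top_of_le_ne_top ?_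
    (lintegral_mono hle)) aemeasurable_const hlint
  simp [Real.volume_Icc]

theorem tendsto_dist_div_of_one_le_supDistDeriv (hg : LipschitzWith 1 g)
    (hdiff : ∀ i, DifferentiableAt ℝ (fun s => dist (x i) (g s)) t)
    (h : 1 ≤ supDistDeriv g x t) :
    Tendsto (fun ε => dist (g t) (g (t + ε)) / ε) (𝓝[>] 0) (𝓝 1) := by
  have upper : ∀ ε > 0, dist (g t) (g (t + ε)) / ε ≤ 1 := fun ε hε => by
    rw [div_le_one hε]
    simpa [abs_of_pos hε] using hg.dist_le_mul t (t + ε)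
  have lower : ∀ i, ∀ c < |deriv (fun s => dist (x i) (g s)) t|,
      ∀ᶠ ε in 𝓝[>] 0, c < dist (g t) (g (t + ε)) / ε := fun i c hc => by
    filter_upwards [(hdiff i).hasDerivAt.tendsto_abs_sub_div_nhdsGT.eventually (lt_mem_nhds hc),
      self_mem_nhdsWithin] with ε hlt (hε : 0 < ε)
    refine hlt.trans_le (div_le_div_of_nonneg_right ?_ hε.le)
    simpa [← Real.dist_eq, dist_comm] using dist_dist_dist_le_right (x i) (g (t + ε)) (g t)
  refine tendsto_order.2 ⟨fun c hc => ?_, fun c hc => ?_⟩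
  · obtain ⟨i, hi⟩ := lt_iSup_iff.1 ((ENNReal.ofReal_lt_one.2 hc).trans_le h)
    rw [Real.enorm_eq_ofReal_abs, ENNReal.ofReal_lt_ofReal_iff'] at hi
    exact lower i c hi.1
  · filter_upwards [self_mem_nhdsWithin] with ε hε using (upper ε hε).trans_lt hc

end SupDistDeriv

theorem LipschitzWith.ae_tendsto_dist_div {X : Type*} [PseudoMetricSpace X] {g : ℝ → X}
    {a b : ℝ} (hg : LipschitzWith 1 g)
    (hvar : ENNReal.ofReal (b - a) ≤ eVariationOn g (Icc a b)) :
    ∀ᵐ t ∂volume.restrict (Icc a b),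
      Tendsto (fun ε => dist (g t) (g (t + ε)) / ε) (𝓝[>] 0) (𝓝 1) := by
  obtain ⟨c, hc, hgc⟩ := TopologicalSpace.isSeparable_range hg.continuous
  have : Countable c := hc.to_subtype
  have hx : range g ⊆ closure (range ((↑) : c → X)) := by rwa [Subtype.range_coe]
  have hdiff : ∀ᵐ t, ∀ i : c, DifferentiableAt ℝ (fun s => dist (i : X) (g s)) t :=
    ae_all_iff.2 fun i => ((LipschitzWith.dist_right (i : X)).comp hg).ae_differentiableAt_of_real
  filter_upwards [ae_supDistDeriv_eq_one hg hx hvar, ae_restrict_of_ae hdiff] with t ht htd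
  exact tendsto_dist_div_of_one_le_supDistDeriv hg htd ht.ge

theorem HasUnitSpeedOn.ae_tendsto_dist_div {X : Type*} [PseudoMetricSpace X] {γ : ℝ → X}
    {a b : ℝ} (h : HasUnitSpeedOn γ (Icc a b)) :
    ∀ᵐ t ∂volume.restrict (Icc a b),
      Tendsto (fun ε => dist (γ t) (γ (t + ε)) / ε) (𝓝[>] 0) (𝓝 1) := by
  rcases lt_or_ge b a with hba | hab
  · simp [Icc_eq_empty_of_lt hba]
  set g := IccExtend hab ((Icc a b).domRestrict γ)
  have hg : LipschitzWith 1 g := by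
    have := (HasConstantSpeedOnWith.lipschitzOnWith h).to_restrict.comp (LipschitzWith.projIcc hab)
    rwa [one_mul] at this
  have hγg : EqOn γ g (Icc a b) := fun t ht => by
    simp [g, IccExtend_of_mem hab _ ht]
  have hvar : ENNReal.ofReal (b - a) ≤ eVariationOn g (Icc a b) := by
    rw [← eVariationOn.eq_of_eqOn hγg, ← inter_self (Icc a b),
      h ⟨le_rfl, hab⟩ ⟨hab, le_rfl⟩, NNReal.coe_one, one_mul]
  have hIoo : ∀ᵐ t ∂volume.restrict (Icc a b), t ∈ Ioo a b := by
    rw [← Measure.restrict_congr_set Ioo_ae_eq_Icc]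
    exact ae_restrict_mem measurableSet_Ioo
  filter_upwards [hg.ae_tendsto_dist_div hvar, hIoo] with t ht htab
  refine ht.congr' ?_
  filter_upwards [Ioo_mem_nhdsGT (sub_pos.2 htab.2)] with ε hε
  rw [hγg (Ioo_subset_Icc_self htab),
    hγg ⟨by linarith [hε.1, htab.1], by linarith [hε.2]⟩]

theorem arclength_param_infinitesimal_isometry_general {X : Type*} [MetricSpace X] (L : ℝ)
    (γ : ℝ → X)
    (harc : ∀ s t : ℝ, 0 ≤ s → s ≤ t → t ≤ L →
      eVariationOn γ (Set.Icc s t) = ENNReal.ofReal (t - s)) :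
    ∀ᵐ t₀ ∂(volume.restrict (Set.Icc 0 L)),
      Tendsto (fun ε : ℝ => dist (γ t₀) (γ (t₀ + ε)) / ε) (nhdsWithin 0 (Set.Ioi 0))
        (nhds 1) := by
  refine HasUnitSpeedOn.ae_tendsto_dist_div (hasConstantSpeedOnWith_iff_ordered.2 ?_)
  intro s hs t ht hst
  rw [inter_eq_right.2 (Icc_subset_Icc hs.1 ht.2), NNReal.coe_one, one_mul]
  exact harc s t hs.1 hst ht.2

/-- if `γ : [0,L] → X` is parametrized by arclength, then for almost every
`t₀ ∈ [0,L]` one has `|γ(t₀) γ(t₀+ε)| = ε + o(ε)` as `ε → 0+`. -/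
theorem arclength_param_infinitesimal_isometry {X : Type*} [MetricSpace X] (L : ℝ)
    (hL : 0 ≤ L) (γ : ℝ → X)
    (harc : ∀ s t : ℝ, 0 ≤ s → s ≤ t → t ≤ L →
      eVariationOn γ (Set.Icc s t) = ENNReal.ofReal (t - s)) :
    ∀ᵐ t₀ ∂(volume.restrict (Set.Icc 0 L)),
      Tendsto (fun ε : ℝ => dist (γ t₀) (γ (t₀ + ε)) / ε) (nhdsWithin 0 (Set.Ioi 0))
        (nhds 1) :=
  arclength_param_infinitesimal_isometry_general L γ harc
end
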